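/- arXiv:1708.07986 — 7 statements merged into one kernel-verified Lean document; each statement's English description precedes it below -/
import Mathlib

section
/- Suppose (γ♯, λ♯) is an eligible pair. Then: (i) there is a sequence ε_n → 0 with 1 − γ⁰ᵀΣ_{-1,-1}γ♯ ≥ Λ_min² − ε_n, so that 1 − γ⁰ᵀΣ_{-1,-1}γ♯ ≫ 0; (ii) for all n large enough, defining Θ₁♯ := (1, −γ♯ᵀ)ᵀ / (1 − γ⁰ᵀΣ_{-1,-1}γ♯) ∈ ℝ^p and λ₀♯ := λ♯ / (1 − γ⁰ᵀΣ_{-1,-1}γ♯), one has ‖Σ(Θ₁♯ − Θ₁)‖_∞ ≤ λ₀♯, and λ₀♯ = O(λ♯); (iii) with Θ₁,₁♯ := (1 − γ⁰ᵀΣ_{-1,-1}γ♯)^{-1} the first entry of Θ₁♯, one has Θ₁♯ᵀΣΘ₁♯ − Θ₁,₁♯ → 0 and limsup_{n→∞} (Θ₁♯ᵀΣΘ₁♯ − Θ_{1,1}) ≤ 0; (iv) if Θ_{1,1} − Θ₁,₁♯ ≫ 0, then λ♯‖γ⁰‖₁ ≫ 0. -/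
open Filter Matrix

noncomputable section

/-- The lower-right `(p-1)×(p-1)` block `Σ_{-1,-1}` of a `p×p` matrix `Σ` (here `p = q+1`). -/
def minorMat {q : ℕ} (Sig : Matrix (Fin (q + 1)) (Fin (q + 1)) ℝ) :
    Matrix (Fin q) (Fin q) ℝ :=
  Sig.submatrix Fin.succ Fin.succ

/-- The vector `Θ₁♯ := (1, -γ♯ᵀ)ᵀ / (1 - γ⁰ᵀ Σ_{-1,-1} γ♯)`. -/
noncomputable def thetaSharp {q : ℕ} (Sig : Matrix (Fin (q + 1)) (Fin (q + 1)) ℝ)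
    (γ0 γs : Fin q → ℝ) : Fin (q + 1) → ℝ :=
  fun i => (Fin.cons (1 : ℝ) (fun j => -(γs j)) : Fin (q + 1) → ℝ) i /
    (1 - γ0 ⬝ᵥ (minorMat Sig *ᵥ γs))

/- ### Auxiliary lemmas -/

lemma aux_quad {m : ℕ} (M : Matrix (Fin m) (Fin m) ℝ) (hM : M.PosDef) (t : ℝ)
    (ht : ∀ i, t ≤ hM.1.eigenvalues i) (v : Fin m → ℝ) :
    t * (v ⬝ᵥ v) ≤ v ⬝ᵥ (M *ᵥ v) := by
  have h1 : (M - t • (1 : Matrix (Fin m) (Fin m) ℝ)).PosSemidef := by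
    set U := (Matrix.IsHermitian.eigenvectorUnitary hM.1 : Matrix (Fin m) (Fin m) ℝ) with hUdef
    have hU : U * star U = 1 :=
      (Matrix.mem_unitaryGroup_iff).mp (Matrix.IsHermitian.eigenvectorUnitary hM.1).2
    have key : M - t • 1
        = U * (Matrix.diagonal (fun i => hM.1.eigenvalues i - t)) * star U := by
      have hd : Matrix.diagonal (fun i => hM.1.eigenvalues i - t)
          = Matrix.diagonal (RCLike.ofReal ∘ hM.1.eigenvalues)
            - t • (1 : Matrix (Fin m) (Fin m) ℝ) := by
        have h1' : t • (1 : Matrix (Fin m) (Fin m) ℝ)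
            = Matrix.diagonal (fun _ => t) := by
          ext i j
          by_cases h : i = j <;>
            simp [Matrix.one_apply, Matrix.diagonal_apply, h]
        rw [h1', ← Matrix.diagonal_sub]
        congr 1
      have hspec := hM.1.spectral_theorem
      simp only [Unitary.conjStarAlgAut_apply, Unitary.coe_star] at hspec
      rw [hd, Matrix.mul_sub, Matrix.sub_mul, ← hspec]
      congr 1
      rw [Matrix.mul_smul, Matrix.mul_one, Matrix.smul_mul, hU]
    rw [key]
    have hdps : (Matrix.diagonal (fun i => hM.1.eigenvalues i - t)).PosSemidef :=
      Matrix.PosSemidef.diagonal (fun i => sub_nonneg.2 (ht i))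
    have := hdps.mul_mul_conjTranspose_same U
    rwa [Matrix.star_eq_conjTranspose] at *
  have h2 := h1.dotProduct_mulVec_nonneg v
  simp only [star_trivial, Matrix.sub_mulVec, dotProduct_sub,
    Matrix.smul_mulVec, Matrix.one_mulVec, dotProduct_smul,
    smul_eq_mul, sub_nonneg] at h2
  exact h2

lemma aux_minor_symm {q : ℕ} (Sg : Matrix (Fin (q + 1)) (Fin (q + 1)) ℝ)
    (hs : Sg.IsSymm) : (minorMat Sg).IsSymm := hs.submatrix _

lemma aux_dot_symm {q : ℕ} (A : Matrix (Fin q) (Fin q) ℝ) (hA : A.IsSymm)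
    (x y : Fin q → ℝ) : x ⬝ᵥ (A *ᵥ y) = (A *ᵥ x) ⬝ᵥ y := by
  rw [Matrix.dotProduct_mulVec, ← Matrix.mulVec_transpose, hA.eq]

lemma aux_mulVec_cons {q : ℕ} (Sg : Matrix (Fin (q + 1)) (Fin (q + 1)) ℝ)
    (hs : Sg.IsSymm) (hd : ∀ i, Sg i i = 1) (γ : Fin q → ℝ) :
    Sg *ᵥ (Fin.cons 1 fun j => -(γ j))
      = Fin.cons (1 - (fun j => Sg j.succ 0) ⬝ᵥ γ)
          (fun j => Sg j.succ 0 - (minorMat Sg *ᵥ γ) j) := by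
  funext i
  refine Fin.cases ?_ ?_ i
  · show (Sg *ᵥ _) 0 = _
    simp only [Matrix.mulVec, dotProduct, Fin.sum_univ_succ, Fin.cons_zero,
      Fin.cons_succ, mul_one, mul_neg, Fin.cons_zero]
    rw [hd 0]
    have : ∀ j : Fin q, Sg 0 j.succ = Sg j.succ 0 := fun j => (hs.apply _ _).symm
    simp only [this]
    rw [Finset.sum_neg_distrib, ← sub_eq_add_neg]
  · intro l
    show (Sg *ᵥ _) l.succ = _
    simp only [Matrix.mulVec, dotProduct, Fin.sum_univ_succ, Fin.cons_zero,
      Fin.cons_succ, mul_one, mul_neg, minorMat, Matrix.submatrix_apply]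
    rw [Finset.sum_neg_distrib, ← sub_eq_add_neg]

lemma aux_cons_dot {q : ℕ} (a : ℝ) (x : Fin q → ℝ) (b : ℝ) (y : Fin q → ℝ) :
    (Fin.cons a x : Fin (q+1) → ℝ) ⬝ᵥ (Fin.cons b y) = a * b + x ⬝ᵥ y := by
  simp [dotProduct, Fin.sum_univ_succ]

lemma aux_quad_expand {q : ℕ} (Sg : Matrix (Fin (q + 1)) (Fin (q + 1)) ℝ)
    (hs : Sg.IsSymm) (hd : ∀ i, Sg i i = 1) (γ : Fin q → ℝ) :
    (Fin.cons 1 fun j => -(γ j) : Fin (q+1) → ℝ) ⬝ᵥ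
        (Sg *ᵥ (Fin.cons 1 fun j => -(γ j)))
      = 1 - (fun j => Sg j.succ 0) ⬝ᵥ γ - γ ⬝ᵥ (fun j => Sg j.succ 0)
          + γ ⬝ᵥ (minorMat Sg *ᵥ γ) := by
  rw [aux_mulVec_cons Sg hs hd, aux_cons_dot]
  have h2 : (fun j => -(γ j)) = -γ := rfl
  have h3 : (fun j => Sg j.succ 0 - (minorMat Sg *ᵥ γ) j)
      = (fun j => Sg j.succ 0) - (minorMat Sg *ᵥ γ) := rfl
  rw [h2, h3, neg_dotProduct, dotProduct_sub]
  ring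

lemma aux_single {q : ℕ} :
    (Pi.single (0 : Fin (q+1)) (1:ℝ)) = (Fin.cons 1 (fun _ => 0) : Fin (q+1) → ℝ) := by
  funext i
  refine Fin.cases ?_ ?_ i
  · simp
  · intro l
    rw [Pi.single_eq_of_ne (Fin.succ_ne_zero l)]
    simp

/-- Lemma `need.lemma`: properties of an eligible pair `(γ♯, λ♯)`. -/
theorem eligible_pair_properties
    (k : ℕ → ℕ) (hk : ∀ n, 1 ≤ k n)
    (Sig : ∀ n, Matrix (Fin (k n + 1)) (Fin (k n + 1)) ℝ)
    (hsymm : ∀ n, (Sig n).IsSymm)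
    (hpos : ∀ n, (Sig n).PosDef)
    (hdiag : ∀ n, ∀ i, Sig n i i = 1)
    -- the smallest eigenvalue of Σ stays away from 0
    (c₀ : ℝ) (hc₀ : 0 < c₀)
    (heig : ∀ n i, c₀ ≤ (hpos n).1.eigenvalues i)
    -- γ⁰ : coefficients of the regression of the first variable on the others
    (γ0 : ∀ n, Fin (k n) → ℝ)
    (hγ0 : ∀ n, minorMat (Sig n) *ᵥ γ0 n = fun j => Sig n j.succ 0)
    -- the eligible pair (γ♯, λ♯)
    (lam : ℕ → ℝ) (hlam : ∀ n, 0 < lam n)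
    (γs : ∀ n, Fin (k n) → ℝ)
    (hE1 : ∀ n j, |(minorMat (Sig n) *ᵥ (fun l => γs n l - γ0 n l)) j| ≤ lam n)
    (hE2 : Tendsto (fun n => lam n * ∑ j, |γs n j|) atTop (nhds 0)) :
    -- (i)  1 - γ⁰ᵀΣ_{-1,-1}γ♯ ≥ Λ_min² - ε_n,  hence ≫ 0
    (∃ ε : ℕ → ℝ, Tendsto ε atTop (nhds 0) ∧
        ∀ n, (⨅ i, (hpos n).1.eigenvalues i) - ε n
          ≤ 1 - γ0 n ⬝ᵥ (minorMat (Sig n) *ᵥ γs n)) ∧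
    (∃ c > (0 : ℝ), ∀ᶠ n in atTop, c ≤ 1 - γ0 n ⬝ᵥ (minorMat (Sig n) *ᵥ γs n)) ∧
    -- (ii)  ‖Σ(Θ₁♯ - Θ₁)‖_∞ ≤ λ₀♯ := λ♯/(1 - γ⁰ᵀΣ_{-1,-1}γ♯) eventually, with λ₀♯ = O(λ♯)
    (∀ᶠ n in atTop, ∀ i,
        |((Sig n) *ᵥ (fun l => thetaSharp (Sig n) (γ0 n) (γs n) l - (Sig n)⁻¹ l 0)) i|
          ≤ lam n / (1 - γ0 n ⬝ᵥ (minorMat (Sig n) *ᵥ γs n))) ∧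
    (∃ C : ℝ, ∀ᶠ n in atTop,
        lam n / (1 - γ0 n ⬝ᵥ (minorMat (Sig n) *ᵥ γs n)) ≤ C * lam n) ∧
    -- (iii)  Θ₁♯ᵀ Σ Θ₁♯ = Θ₁,₁♯ + o(1) and limsup (Θ₁♯ᵀ Σ Θ₁♯ - Θ_{1,1}) ≤ 0
    Tendsto (fun n =>
        thetaSharp (Sig n) (γ0 n) (γs n) ⬝ᵥ ((Sig n) *ᵥ thetaSharp (Sig n) (γ0 n) (γs n))
          - (1 - γ0 n ⬝ᵥ (minorMat (Sig n) *ᵥ γs n))⁻¹) atTop (nhds 0) ∧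
    limsup (fun n =>
        thetaSharp (Sig n) (γ0 n) (γs n) ⬝ᵥ ((Sig n) *ᵥ thetaSharp (Sig n) (γ0 n) (γs n))
          - (Sig n)⁻¹ 0 0) atTop ≤ 0 ∧
    -- (iv)  if Θ_{1,1} - Θ₁,₁♯ ≫ 0 then λ♯ ‖γ⁰‖₁ ≫ 0
    ((∃ c > (0 : ℝ), ∀ᶠ n in atTop,
        c ≤ (Sig n)⁻¹ 0 0 - (1 - γ0 n ⬝ᵥ (minorMat (Sig n) *ᵥ γs n))⁻¹) →
      ∃ c > (0 : ℝ), ∀ᶠ n in atTop, c ≤ lam n * ∑ j, |γ0 n j|) := by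
  classical
  -- notation
  set ε : ℕ → ℝ := fun n => lam n * ∑ j, |γs n j| with hεdef
  -- basic facts
  have hAsym : ∀ n, (minorMat (Sig n)).IsSymm := fun n => aux_minor_symm _ (hsymm n)
  have hγdot : ∀ n (x : Fin (k n) → ℝ),
      γ0 n ⬝ᵥ (minorMat (Sig n) *ᵥ x) = (fun j => Sig n j.succ 0) ⬝ᵥ x := by
    intro n x
    rw [aux_dot_symm _ (hAsym n), hγ0 n]
  have hAd : ∀ n j, |(minorMat (Sig n) *ᵥ (fun l => γ0 n l - γs n l)) j| ≤ lam n := by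
    intro n j
    have h1 : (fun l => γ0 n l - γs n l) = -(fun l => γs n l - γ0 n l) := by
      funext l; simp
    rw [h1, Matrix.mulVec_neg]
    simpa using hE1 n j
  have hδε : ∀ n,
      |γs n ⬝ᵥ (minorMat (Sig n) *ᵥ (fun l => γ0 n l - γs n l))| ≤ ε n := by
    intro n
    have hcalc : |∑ j, γs n j * (minorMat (Sig n) *ᵥ (fun l => γ0 n l - γs n l)) j| ≤ ε n := by
      calc |∑ j, γs n j * (minorMat (Sig n) *ᵥ (fun l => γ0 n l - γs n l)) j|
          ≤ ∑ j, |γs n j * (minorMat (Sig n) *ᵥ (fun l => γ0 n l - γs n l)) j| :=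
            Finset.abs_sum_le_sum_abs _ _
        _ ≤ ∑ j, |γs n j| * lam n := by
            refine Finset.sum_le_sum fun j _ => ?_
            rw [abs_mul]
            exact mul_le_mul_of_nonneg_left (hAd n j) (abs_nonneg _)
        _ = ε n := by rw [← Finset.sum_mul, hεdef]; ring
    simpa [dotProduct] using hcalc
  have hεnn : ∀ n, 0 ≤ ε n := fun n => le_trans (abs_nonneg _) (hδε n)
  -- the key algebraic identity : Ssh = Ms + δ
  have hSsh_eq : ∀ n, 1 - γ0 n ⬝ᵥ (minorMat (Sig n) *ᵥ γs n)
      = (Fin.cons 1 fun j => -(γs n j) : Fin (k n + 1) → ℝ) ⬝ᵥ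
          (Sig n *ᵥ (Fin.cons 1 fun j => -(γs n j)))
        + γs n ⬝ᵥ (minorMat (Sig n) *ᵥ (fun l => γ0 n l - γs n l)) := by
    intro n
    rw [aux_quad_expand _ (hsymm n) (hdiag n), hγdot n]
    have h1 : (minorMat (Sig n) *ᵥ fun l => γ0 n l - γs n l)
        = minorMat (Sig n) *ᵥ γ0 n - minorMat (Sig n) *ᵥ γs n := by
      have e : (fun l => γ0 n l - γs n l) = γ0 n - γs n := rfl
      rw [e, Matrix.mulVec_sub]
    rw [h1, dotProduct_sub, hγ0 n]
    rw [dotProduct_comm (fun j => Sig n j.succ 0) (γs n)]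
    ring
  -- S = w0 Σ w0 and S ≥ c₀
  have hS_eq : ∀ n, 1 - γ0 n ⬝ᵥ (minorMat (Sig n) *ᵥ γ0 n)
      = (Fin.cons 1 fun j => -(γ0 n j) : Fin (k n + 1) → ℝ) ⬝ᵥ
          (Sig n *ᵥ (Fin.cons 1 fun j => -(γ0 n j))) := by
    intro n
    rw [aux_quad_expand _ (hsymm n) (hdiag n), hγdot n,
      dotProduct_comm (fun j => Sig n j.succ 0) (γ0 n)]
    ring
  have hcons_one : ∀ (q : ℕ) (x : Fin q → ℝ),
      1 ≤ (Fin.cons 1 (fun j => -(x j)) : Fin (q+1) → ℝ) ⬝ᵥ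
        (Fin.cons 1 fun j => -(x j)) := by
    intro q x
    rw [aux_cons_dot]
    have h1 : 0 ≤ (fun j => -(x j)) ⬝ᵥ (fun j => -(x j)) := by
      have : 0 ≤ ∑ j, (-(x j)) * (-(x j)) :=
        Finset.sum_nonneg fun j _ => mul_self_nonneg _
      simpa [dotProduct] using this
    linarith
  have hS_lb : ∀ n, c₀ ≤ 1 - γ0 n ⬝ᵥ (minorMat (Sig n) *ᵥ γ0 n) := by
    intro n
    rw [hS_eq n]
    calc c₀ = c₀ * 1 := by ring
      _ ≤ c₀ * ((Fin.cons 1 fun j => -(γ0 n j) : Fin (k n + 1) → ℝ) ⬝ᵥ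
            (Fin.cons 1 fun j => -(γ0 n j))) :=
          mul_le_mul_of_nonneg_left (hcons_one _ _) hc₀.le
      _ ≤ _ := aux_quad _ (hpos n) c₀ (heig n) _
  have hS_pos : ∀ n, 0 < 1 - γ0 n ⬝ᵥ (minorMat (Sig n) *ᵥ γ0 n) :=
    fun n => lt_of_lt_of_le hc₀ (hS_lb n)
  -- (i) part 1
  have hΛc₀ : ∀ n, c₀ ≤ ⨅ i, (hpos n).1.eigenvalues i := fun n => le_ciInf (heig n)
  have hSsh_lb : ∀ n, (⨅ i, (hpos n).1.eigenvalues i) - ε n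
      ≤ 1 - γ0 n ⬝ᵥ (minorMat (Sig n) *ᵥ γs n) := by
    intro n
    have hΛle : ∀ i, (⨅ i, (hpos n).1.eigenvalues i) ≤ (hpos n).1.eigenvalues i :=
      fun i => ciInf_le (Finite.bddBelow_range _) i
    have h1 := aux_quad _ (hpos n) _ hΛle (Fin.cons 1 fun j => -(γs n j))
    have h2 : (⨅ i, (hpos n).1.eigenvalues i)
        ≤ (⨅ i, (hpos n).1.eigenvalues i) * ((Fin.cons 1 fun j => -(γs n j) : Fin (k n+1) → ℝ)
            ⬝ᵥ (Fin.cons 1 fun j => -(γs n j))) :=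
      le_mul_of_one_le_right (le_trans hc₀.le (hΛc₀ n)) (hcons_one _ _)
    have h3 := abs_le.1 (hδε n)
    rw [hSsh_eq n]
    linarith
  -- the main eventual positivity fact
  have hev : ∀ᶠ n in atTop, c₀/2 ≤ 1 - γ0 n ⬝ᵥ (minorMat (Sig n) *ᵥ γs n) := by
    have h := hE2.eventually_le_const (half_pos hc₀)
    filter_upwards [h] with n hn
    have := hSsh_lb n
    have h2 := hΛc₀ n
    have : ε n ≤ c₀/2 := hn
    linarith [hSsh_lb n]
  have hSsh_pos : ∀ n, c₀/2 ≤ 1 - γ0 n ⬝ᵥ (minorMat (Sig n) *ᵥ γs n) →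
      0 < 1 - γ0 n ⬝ᵥ (minorMat (Sig n) *ᵥ γs n) :=
    fun n hn => lt_of_lt_of_le (half_pos hc₀) hn
  -- mulVec with the sharp vector
  have hws_mul : ∀ n, Sig n *ᵥ (Fin.cons 1 fun j => -(γs n j))
      = Fin.cons (1 - γ0 n ⬝ᵥ (minorMat (Sig n) *ᵥ γs n))
          (fun j => (minorMat (Sig n) *ᵥ (fun l => γ0 n l - γs n l)) j) := by
    intro n
    rw [aux_mulVec_cons _ (hsymm n) (hdiag n), hγdot n]
    congr 1
    funext j
    have e : (fun l => γ0 n l - γs n l) = γ0 n - γs n := rfl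
    rw [e, Matrix.mulVec_sub, hγ0 n]
    simp
  -- the first column of Σ⁻¹
  have hdet : ∀ n, IsUnit (Sig n).det := fun n =>
    isUnit_iff_ne_zero.mpr (hpos n).det_pos.ne'
  have hcol : ∀ n, (fun l => (Sig n)⁻¹ l 0)
      = fun l => (Fin.cons 1 (fun j => -(γ0 n j)) : Fin (k n + 1) → ℝ) l
          / (1 - γ0 n ⬝ᵥ (minorMat (Sig n) *ᵥ γ0 n)) := by
    intro n
    have hSpos := hS_pos n
    have hw0m : Sig n *ᵥ (Fin.cons 1 fun j => -(γ0 n j))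
        = (Fin.cons (1 - γ0 n ⬝ᵥ (minorMat (Sig n) *ᵥ γ0 n)) (fun _ => 0) :
            Fin (k n + 1) → ℝ) := by
      rw [aux_mulVec_cons _ (hsymm n) (hdiag n), hγdot n]
      congr 1
      funext j
      rw [hγ0 n]
      simp
    have hθ : Sig n *ᵥ (fun l => (Fin.cons 1 (fun j => -(γ0 n j)) : Fin (k n + 1) → ℝ) l
          / (1 - γ0 n ⬝ᵥ (minorMat (Sig n) *ᵥ γ0 n))) = Pi.single 0 1 := by
      have h1 : (fun l => (Fin.cons 1 (fun j => -(γ0 n j)) : Fin (k n + 1) → ℝ) l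
            / (1 - γ0 n ⬝ᵥ (minorMat (Sig n) *ᵥ γ0 n)))
          = (1 - γ0 n ⬝ᵥ (minorMat (Sig n) *ᵥ γ0 n))⁻¹
            • (Fin.cons 1 (fun j => -(γ0 n j)) : Fin (k n + 1) → ℝ) := by
        funext l
        simp [div_eq_inv_mul]
      rw [h1, Matrix.mulVec_smul, hw0m, aux_single]
      funext i
      refine Fin.cases ?_ ?_ i
      · simp [inv_mul_cancel₀ hSpos.ne']
      · intro l; simp
    funext l
    have hcong := congrFun (congrArg (fun v => (Sig n)⁻¹ *ᵥ v) hθ) l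
    simp only [Matrix.mulVec_mulVec, Matrix.nonsing_inv_mul _ (hdet n),
      Matrix.one_mulVec] at hcong
    rw [hcong, Matrix.mulVec_single]
    simp
  have hΘ00 : ∀ n, (Sig n)⁻¹ 0 0 = (1 - γ0 n ⬝ᵥ (minorMat (Sig n) *ᵥ γ0 n))⁻¹ := by
    intro n
    have := congrFun (hcol n) 0
    simpa [one_div] using this
  have hcolmul : ∀ n, Sig n *ᵥ (fun l => (Sig n)⁻¹ l 0) = Pi.single 0 1 := by
    intro n
    have hmul : Sig n * (Sig n)⁻¹ = 1 := Matrix.mul_nonsing_inv _ (hdet n)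
    funext i
    have h2 := congrFun (congrFun hmul i) 0
    simp only [Matrix.mul_apply, Matrix.one_apply] at h2
    simp only [Matrix.mulVec, dotProduct]
    rw [h2]
    by_cases h : i = 0 <;> simp [h, Pi.single_apply]
  -- the sharp vector as a scalar multiple
  have hθs_smul : ∀ n, thetaSharp (Sig n) (γ0 n) (γs n)
      = (1 - γ0 n ⬝ᵥ (minorMat (Sig n) *ᵥ γs n))⁻¹
          • (Fin.cons 1 (fun j => -(γs n j)) : Fin (k n + 1) → ℝ) := by
    intro n
    funext l
    simp [thetaSharp, div_eq_inv_mul]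
  have hthQF : ∀ n, thetaSharp (Sig n) (γ0 n) (γs n) ⬝ᵥ
        ((Sig n) *ᵥ thetaSharp (Sig n) (γ0 n) (γs n))
      = (1 - γ0 n ⬝ᵥ (minorMat (Sig n) *ᵥ γs n))⁻¹ *
          ((1 - γ0 n ⬝ᵥ (minorMat (Sig n) *ᵥ γs n))⁻¹ *
            ((Fin.cons 1 fun j => -(γs n j) : Fin (k n + 1) → ℝ) ⬝ᵥ
              (Sig n *ᵥ (Fin.cons 1 fun j => -(γs n j))))) := by
    intro n
    rw [hθs_smul n, Matrix.mulVec_smul, smul_dotProduct, dotProduct_smul]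
    simp [smul_eq_mul]
  -- key bound: |θ♯Σθ♯ - Ssh⁻¹| ≤ ε · 4/c₀²
  have hkey : ∀ n, c₀/2 ≤ 1 - γ0 n ⬝ᵥ (minorMat (Sig n) *ᵥ γs n) →
      |thetaSharp (Sig n) (γ0 n) (γs n) ⬝ᵥ ((Sig n) *ᵥ thetaSharp (Sig n) (γ0 n) (γs n))
        - (1 - γ0 n ⬝ᵥ (minorMat (Sig n) *ᵥ γs n))⁻¹| ≤ ε n * (4/(c₀*c₀)) := by
    intro n hn
    have hspos : 0 < 1 - γ0 n ⬝ᵥ (minorMat (Sig n) *ᵥ γs n) := hSsh_pos n hn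
    have hM : (Fin.cons 1 fun j => -(γs n j) : Fin (k n + 1) → ℝ) ⬝ᵥ
          (Sig n *ᵥ (Fin.cons 1 fun j => -(γs n j)))
        = (1 - γ0 n ⬝ᵥ (minorMat (Sig n) *ᵥ γs n))
          - γs n ⬝ᵥ (minorMat (Sig n) *ᵥ (fun l => γ0 n l - γs n l)) := by
      have := hSsh_eq n
      linarith
    rw [hthQF n, hM]
    have hval : (1 - γ0 n ⬝ᵥ (minorMat (Sig n) *ᵥ γs n))⁻¹ *
          ((1 - γ0 n ⬝ᵥ (minorMat (Sig n) *ᵥ γs n))⁻¹ *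
            ((1 - γ0 n ⬝ᵥ (minorMat (Sig n) *ᵥ γs n))
              - γs n ⬝ᵥ (minorMat (Sig n) *ᵥ (fun l => γ0 n l - γs n l))))
          - (1 - γ0 n ⬝ᵥ (minorMat (Sig n) *ᵥ γs n))⁻¹
        = -((γs n ⬝ᵥ (minorMat (Sig n) *ᵥ (fun l => γ0 n l - γs n l))) *
            ((1 - γ0 n ⬝ᵥ (minorMat (Sig n) *ᵥ γs n))⁻¹ *
              (1 - γ0 n ⬝ᵥ (minorMat (Sig n) *ᵥ γs n))⁻¹)) := by
      field_simp
      ring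
    rw [hval, abs_neg, abs_mul]
    have hsi : (1 - γ0 n ⬝ᵥ (minorMat (Sig n) *ᵥ γs n))⁻¹ ≤ (c₀/2)⁻¹ :=
      inv_anti₀ (half_pos hc₀) hn
    have h2 : |(1 - γ0 n ⬝ᵥ (minorMat (Sig n) *ᵥ γs n))⁻¹ *
          (1 - γ0 n ⬝ᵥ (minorMat (Sig n) *ᵥ γs n))⁻¹|
        = (1 - γ0 n ⬝ᵥ (minorMat (Sig n) *ᵥ γs n))⁻¹ *
          (1 - γ0 n ⬝ᵥ (minorMat (Sig n) *ᵥ γs n))⁻¹ := abs_of_nonneg (by positivity)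
    have h3 : (1 - γ0 n ⬝ᵥ (minorMat (Sig n) *ᵥ γs n))⁻¹ *
          (1 - γ0 n ⬝ᵥ (minorMat (Sig n) *ᵥ γs n))⁻¹ ≤ 4/(c₀*c₀) := by
      have h4 : (c₀/2)⁻¹ * (c₀/2)⁻¹ = 4/(c₀*c₀) := by
        field_simp
        ring
      calc (1 - γ0 n ⬝ᵥ (minorMat (Sig n) *ᵥ γs n))⁻¹ *
            (1 - γ0 n ⬝ᵥ (minorMat (Sig n) *ᵥ γs n))⁻¹
          ≤ (c₀/2)⁻¹ * (c₀/2)⁻¹ :=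
            mul_le_mul hsi hsi (by positivity) (by positivity)
        _ = 4/(c₀*c₀) := h4
    rw [h2]
    exact mul_le_mul (hδε n) h3 (by positivity) (hεnn n)
  -- Ms ≥ S
  have hMsS : ∀ n, 1 - γ0 n ⬝ᵥ (minorMat (Sig n) *ᵥ γ0 n)
      ≤ (Fin.cons 1 fun j => -(γs n j) : Fin (k n + 1) → ℝ) ⬝ᵥ
          (Sig n *ᵥ (Fin.cons 1 fun j => -(γs n j))) := by
    intro n
    have hd0 : 0 ≤ (fun l => γ0 n l - γs n l) ⬝ᵥ
        (minorMat (Sig n) *ᵥ fun l => γ0 n l - γs n l) := by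
      have h := ((hpos n).posSemidef.submatrix (Fin.succ)).dotProduct_mulVec_nonneg (fun l => γ0 n l - γs n l)
      simpa [minorMat] using h
    have hid : (Fin.cons 1 fun j => -(γs n j) : Fin (k n + 1) → ℝ) ⬝ᵥ
          (Sig n *ᵥ (Fin.cons 1 fun j => -(γs n j)))
        = (1 - γ0 n ⬝ᵥ (minorMat (Sig n) *ᵥ γ0 n))
          + (fun l => γ0 n l - γs n l) ⬝ᵥ
              (minorMat (Sig n) *ᵥ fun l => γ0 n l - γs n l) := by
      rw [aux_quad_expand _ (hsymm n) (hdiag n)]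
      have e : (fun l => γ0 n l - γs n l) = γ0 n - γs n := rfl
      rw [e, Matrix.mulVec_sub, dotProduct_sub, sub_dotProduct,
        sub_dotProduct, hγ0 n, hγdot n (γs n),
        dotProduct_comm (fun j => Sig n j.succ 0) (γs n)]
      ring
    linarith
  refine ⟨⟨ε, hE2, hSsh_lb⟩, ⟨c₀/2, half_pos hc₀, hev⟩, ?_, ?_, ?_, ?_, ?_⟩
  · -- (ii) sup-norm bound
    filter_upwards [hev] with n hn
    intro i
    have hspos : 0 < 1 - γ0 n ⬝ᵥ (minorMat (Sig n) *ᵥ γs n) := hSsh_pos n hn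
    have e0 : (fun l => thetaSharp (Sig n) (γ0 n) (γs n) l - (Sig n)⁻¹ l 0)
        = thetaSharp (Sig n) (γ0 n) (γs n) - (fun l => (Sig n)⁻¹ l 0) := rfl
    rw [e0, Matrix.mulVec_sub, hcolmul n, hθs_smul n, Matrix.mulVec_smul, hws_mul n]
    refine Fin.cases ?_ ?_ i
    · rw [Pi.sub_apply, Pi.smul_apply, Fin.cons_zero, smul_eq_mul,
        inv_mul_cancel₀ hspos.ne']
      simp only [Pi.single_eq_same, sub_self, abs_zero]
      exact div_nonneg (hlam n).le hspos.le
    · intro j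
      rw [Pi.sub_apply, Pi.smul_apply, Fin.cons_succ, smul_eq_mul,
        Pi.single_eq_of_ne (Fin.succ_ne_zero j), sub_zero, abs_mul, abs_inv,
        abs_of_pos hspos, div_eq_inv_mul]
      exact mul_le_mul_of_nonneg_left (hAd n j) (inv_nonneg.2 hspos.le)
  · -- (ii) λ₀♯ = O(λ♯)
    refine ⟨2/c₀, ?_⟩
    filter_upwards [hev] with n hn
    have hspos : 0 < 1 - γ0 n ⬝ᵥ (minorMat (Sig n) *ᵥ γs n) := hSsh_pos n hn
    rw [div_le_iff₀ hspos]
    have h1 : 2/c₀ * lam n * (c₀/2) = lam n := by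
      field_simp
    calc lam n = 2/c₀ * lam n * (c₀/2) := h1.symm
      _ ≤ 2/c₀ * lam n * (1 - γ0 n ⬝ᵥ (minorMat (Sig n) *ᵥ γs n)) := by
          exact mul_le_mul_of_nonneg_left hn
            (mul_nonneg (by positivity) (hlam n).le)
  · -- (iii) first
    apply squeeze_zero_norm' (a := fun n => ε n * (4/(c₀*c₀)))
    · filter_upwards [hev] with n hn
      exact hkey n hn
    · have := hE2.mul_const (4/(c₀*c₀))
      simpa using this
  · -- (iii) limsup
    have hf2b : ∀ᶠ n in atTop,
        (thetaSharp (Sig n) (γ0 n) (γs n) ⬝ᵥ ((Sig n) *ᵥ thetaSharp (Sig n) (γ0 n) (γs n))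
          - (Sig n)⁻¹ 0 0) ≤ ε n * (6/(c₀*c₀)) := by
      filter_upwards [hev] with n hn
      have h1 := hkey n hn
      have hspos : 0 < 1 - γ0 n ⬝ᵥ (minorMat (Sig n) *ᵥ γs n) := hSsh_pos n hn
      have hS' := hS_pos n
      have hSlb := hS_lb n
      rw [hΘ00 n]
      have h2 : (1 - γ0 n ⬝ᵥ (minorMat (Sig n) *ᵥ γs n))⁻¹
            - (1 - γ0 n ⬝ᵥ (minorMat (Sig n) *ᵥ γ0 n))⁻¹
          ≤ ε n * (2/(c₀*c₀)) := by
        have hdiff : (1 - γ0 n ⬝ᵥ (minorMat (Sig n) *ᵥ γs n))⁻¹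
              - (1 - γ0 n ⬝ᵥ (minorMat (Sig n) *ᵥ γ0 n))⁻¹
            = ((1 - γ0 n ⬝ᵥ (minorMat (Sig n) *ᵥ γ0 n))
                - (1 - γ0 n ⬝ᵥ (minorMat (Sig n) *ᵥ γs n)))
              / ((1 - γ0 n ⬝ᵥ (minorMat (Sig n) *ᵥ γs n))
                * (1 - γ0 n ⬝ᵥ (minorMat (Sig n) *ᵥ γ0 n))) := by
          field_simp
        have hnum : (1 - γ0 n ⬝ᵥ (minorMat (Sig n) *ᵥ γ0 n))
            - (1 - γ0 n ⬝ᵥ (minorMat (Sig n) *ᵥ γs n)) ≤ ε n := by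
          have hq := hSsh_eq n
          have hMs := hMsS n
          have h3 := neg_abs_le (γs n ⬝ᵥ (minorMat (Sig n) *ᵥ (fun l => γ0 n l - γs n l)))
          have h4 := hδε n
          linarith
        have hden : (c₀/2) * c₀ ≤ (1 - γ0 n ⬝ᵥ (minorMat (Sig n) *ᵥ γs n))
            * (1 - γ0 n ⬝ᵥ (minorMat (Sig n) *ᵥ γ0 n)) :=
          mul_le_mul hn hSlb hc₀.le hspos.le
        have h5 : ε n / ((c₀/2) * c₀) = ε n * (2/(c₀*c₀)) := by
          field_simp
        calc (1 - γ0 n ⬝ᵥ (minorMat (Sig n) *ᵥ γs n))⁻¹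
              - (1 - γ0 n ⬝ᵥ (minorMat (Sig n) *ᵥ γ0 n))⁻¹
            = _ := hdiff
          _ ≤ ε n / ((c₀/2) * c₀) :=
              div_le_div₀ (hεnn n) hnum (by positivity) hden
          _ = ε n * (2/(c₀*c₀)) := h5
      have h1' : thetaSharp (Sig n) (γ0 n) (γs n) ⬝ᵥ
            ((Sig n) *ᵥ thetaSharp (Sig n) (γ0 n) (γs n))
          - (1 - γ0 n ⬝ᵥ (minorMat (Sig n) *ᵥ γs n))⁻¹ ≤ ε n * (4/(c₀*c₀)) :=
        le_trans (le_abs_self _) h1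
      have h6 : ε n * (4/(c₀*c₀)) + ε n * (2/(c₀*c₀)) = ε n * (6/(c₀*c₀)) := by ring
      linarith
    have hg6 : Tendsto (fun n => ε n * (6/(c₀*c₀))) atTop (nhds 0) := by
      have := hE2.mul_const (6/(c₀*c₀))
      simpa using this
    have hcb : IsCoboundedUnder (· ≤ ·) atTop (fun n =>
        thetaSharp (Sig n) (γ0 n) (γs n) ⬝ᵥ ((Sig n) *ᵥ thetaSharp (Sig n) (γ0 n) (γs n))
          - (Sig n)⁻¹ 0 0) := by
      apply Filter.IsBoundedUnder.isCoboundedUnder_le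
      refine isBoundedUnder_of ⟨-c₀⁻¹, fun n => ?_⟩
      have hnn : 0 ≤ thetaSharp (Sig n) (γ0 n) (γs n) ⬝ᵥ
          ((Sig n) *ᵥ thetaSharp (Sig n) (γ0 n) (γs n)) := by
        have := (hpos n).posSemidef.dotProduct_mulVec_nonneg (thetaSharp (Sig n) (γ0 n) (γs n))
        simpa using this
      have hle : (Sig n)⁻¹ 0 0 ≤ c₀⁻¹ := by
        rw [hΘ00 n]
        exact inv_anti₀ hc₀ (hS_lb n)
      simp only [ge_iff_le]
      linarith
    calc limsup (fun n =>
          thetaSharp (Sig n) (γ0 n) (γs n) ⬝ᵥ ((Sig n) *ᵥ thetaSharp (Sig n) (γ0 n) (γs n))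
            - (Sig n)⁻¹ 0 0) atTop
        ≤ limsup (fun n => ε n * (6/(c₀*c₀))) atTop :=
          limsup_le_limsup hf2b hcb hg6.isBoundedUnder_le
      _ = 0 := hg6.limsup_eq
  · -- (iv)
    rintro ⟨c, hc, hcev⟩
    refine ⟨c * ((c₀/2) * c₀), by positivity, ?_⟩
    filter_upwards [hev, hcev] with n hn hcn
    have hspos : 0 < 1 - γ0 n ⬝ᵥ (minorMat (Sig n) *ᵥ γs n) := hSsh_pos n hn
    have hS' := hS_pos n
    rw [hΘ00 n] at hcn
    have hdiff : (1 - γ0 n ⬝ᵥ (minorMat (Sig n) *ᵥ γ0 n))⁻¹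
          - (1 - γ0 n ⬝ᵥ (minorMat (Sig n) *ᵥ γs n))⁻¹
        = ((1 - γ0 n ⬝ᵥ (minorMat (Sig n) *ᵥ γs n))
            - (1 - γ0 n ⬝ᵥ (minorMat (Sig n) *ᵥ γ0 n)))
          / ((1 - γ0 n ⬝ᵥ (minorMat (Sig n) *ᵥ γ0 n))
            * (1 - γ0 n ⬝ᵥ (minorMat (Sig n) *ᵥ γs n))) := by
      field_simp
    rw [hdiff, le_div_iff₀ (by positivity)] at hcn
    -- Ssh - S = γ0 ⬝ A (γ0 - γs) ≤ lam * Σ|γ0|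
    have hid : (1 - γ0 n ⬝ᵥ (minorMat (Sig n) *ᵥ γs n))
          - (1 - γ0 n ⬝ᵥ (minorMat (Sig n) *ᵥ γ0 n))
        = γ0 n ⬝ᵥ (minorMat (Sig n) *ᵥ (fun l => γ0 n l - γs n l)) := by
      have e : (fun l => γ0 n l - γs n l) = γ0 n - γs n := rfl
      rw [e, Matrix.mulVec_sub, dotProduct_sub]
      ring
    have hub : γ0 n ⬝ᵥ (minorMat (Sig n) *ᵥ (fun l => γ0 n l - γs n l))
        ≤ lam n * ∑ j, |γ0 n j| := by
      have hcalc : ∑ j, γ0 n j * (minorMat (Sig n) *ᵥ (fun l => γ0 n l - γs n l)) j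
          ≤ lam n * ∑ j, |γ0 n j| := by
        calc ∑ j, γ0 n j * (minorMat (Sig n) *ᵥ (fun l => γ0 n l - γs n l)) j
            ≤ ∑ j, |γ0 n j * (minorMat (Sig n) *ᵥ (fun l => γ0 n l - γs n l)) j| :=
              Finset.sum_le_sum fun j _ => le_abs_self _
          _ ≤ ∑ j, |γ0 n j| * lam n := by
              refine Finset.sum_le_sum fun j _ => ?_
              rw [abs_mul]
              exact mul_le_mul_of_nonneg_left (hAd n j) (abs_nonneg _)
          _ = lam n * ∑ j, |γ0 n j| := by rw [← Finset.sum_mul]; ring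
      simpa [dotProduct] using hcalc
    have hden : c * ((c₀/2) * c₀)
        ≤ c * ((1 - γ0 n ⬝ᵥ (minorMat (Sig n) *ᵥ γ0 n))
            * (1 - γ0 n ⬝ᵥ (minorMat (Sig n) *ᵥ γs n))) := by
      apply mul_le_mul_of_nonneg_left _ hc.le
      calc (c₀/2) * c₀ = c₀ * (c₀/2) := by ring
        _ ≤ (1 - γ0 n ⬝ᵥ (minorMat (Sig n) *ᵥ γ0 n))
            * (1 - γ0 n ⬝ᵥ (minorMat (Sig n) *ᵥ γs n)) :=
          mul_le_mul (hS_lb n) hn (half_pos hc₀).le hS'.le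
    linarith
end
end

section
/- Fix a sequence λ♯ = λ♯(n) > 0 and let (γ♯, λ♯) and (γ♭, λ♯) both be eligible pairs. Then (γ♯ − γ♭)ᵀ Σ_{-1,-1} (γ♯ − γ♭) → 0 as n → ∞, i.e. ‖Σ_{-1,-1}^{1/2}(γ♯ − γ♭)‖₂² → 0. -/
open Filter Matrix

noncomputable section

/-- if `(γ♯, λ♯)` and `(γ♭, λ♯)` are both eligible pairs, then
`(γ♯ - γ♭)ᵀ Σ_{-1,-1} (γ♯ - γ♭) → 0`. -/
theorem uniqueness_of_eligible_pairs
    (k : ℕ → ℕ) (hk : ∀ n, 1 ≤ k n)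
    (Sig : ∀ n, Matrix (Fin (k n + 1)) (Fin (k n + 1)) ℝ)
    (hsymm : ∀ n, (Sig n).IsSymm)
    (hpos : ∀ n, (Sig n).PosDef)
    (hdiag : ∀ n, ∀ i, Sig n i i = 1)
    -- γ⁰ : coefficients of the regression of the first variable on the others
    (γ0 : ∀ n, Fin (k n) → ℝ)
    (hγ0 : ∀ n, minorMat (Sig n) *ᵥ γ0 n = fun j => Sig n j.succ 0)
    -- the common λ♯, and the two eligible pairs (γ♯, λ♯), (γ♭, λ♯)
    (lam : ℕ → ℝ) (hlam : ∀ n, 0 < lam n)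
    (γs γf : ∀ n, Fin (k n) → ℝ)
    (hγs1 : ∀ n j, |(minorMat (Sig n) *ᵥ (fun l => γs n l - γ0 n l)) j| ≤ lam n)
    (hγs2 : Tendsto (fun n => lam n * ∑ j, |γs n j|) atTop (nhds 0))
    (hγf1 : ∀ n j, |(minorMat (Sig n) *ᵥ (fun l => γf n l - γ0 n l)) j| ≤ lam n)
    (hγf2 : Tendsto (fun n => lam n * ∑ j, |γf n j|) atTop (nhds 0)) :
    Tendsto (fun n => (fun l => γs n l - γf n l) ⬝ᵥ
      (minorMat (Sig n) *ᵥ (fun l => γs n l - γf n l))) atTop (nhds 0) := by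
  -- lower bound: nonnegativity from positive semidefiniteness of the submatrix
  have hlb : ∀ n, 0 ≤ (fun l => γs n l - γf n l) ⬝ᵥ
      (minorMat (Sig n) *ᵥ (fun l => γs n l - γf n l)) := by
    intro n
    have hps : (minorMat (Sig n)).PosSemidef :=
      (hpos n).posSemidef.submatrix Fin.succ
    simpa using hps.dotProduct_mulVec_nonneg (fun l => γs n l - γf n l)
  -- sup-norm bound on M *ᵥ δ
  have hMδ : ∀ n j, |(minorMat (Sig n) *ᵥ (fun l => γs n l - γf n l)) j| ≤ 2 * lam n := by
    intro n j
    have hδ : (fun l => γs n l - γf n l)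
        = (fun l => γs n l - γ0 n l) - (fun l => γf n l - γ0 n l) := by
      funext l; simp only [Pi.sub_apply]; ring
    rw [hδ, mulVec_sub]
    calc |((minorMat (Sig n) *ᵥ (fun l => γs n l - γ0 n l))
            - (minorMat (Sig n) *ᵥ (fun l => γf n l - γ0 n l))) j|
        ≤ |(minorMat (Sig n) *ᵥ (fun l => γs n l - γ0 n l)) j|
          + |(minorMat (Sig n) *ᵥ (fun l => γf n l - γ0 n l)) j| := by
          simpa [Pi.sub_apply] using
            abs_sub ((minorMat (Sig n) *ᵥ (fun l => γs n l - γ0 n l)) j)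
              ((minorMat (Sig n) *ᵥ (fun l => γf n l - γ0 n l)) j)
      _ ≤ lam n + lam n := add_le_add (hγs1 n j) (hγf1 n j)
      _ = 2 * lam n := by ring
  -- upper bound
  have hub : ∀ n, (fun l => γs n l - γf n l) ⬝ᵥ
      (minorMat (Sig n) *ᵥ (fun l => γs n l - γf n l))
      ≤ 2 * (lam n * ∑ j, |γs n j| + lam n * ∑ j, |γf n j|) := by
    intro n
    calc (fun l => γs n l - γf n l) ⬝ᵥ (minorMat (Sig n) *ᵥ (fun l => γs n l - γf n l))
        ≤ ∑ l, |γs n l - γf n l| * |(minorMat (Sig n) *ᵥ (fun l => γs n l - γf n l)) l| := by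
          refine Finset.sum_le_sum fun l _ => ?_
          calc (γs n l - γf n l) * (minorMat (Sig n) *ᵥ (fun l => γs n l - γf n l)) l
              ≤ |(γs n l - γf n l) * (minorMat (Sig n) *ᵥ (fun l => γs n l - γf n l)) l| :=
                le_abs_self _
            _ = _ := abs_mul _ _
      _ ≤ ∑ l, |γs n l - γf n l| * (2 * lam n) := by
          refine Finset.sum_le_sum fun l _ => ?_
          exact mul_le_mul_of_nonneg_left (hMδ n l) (abs_nonneg _)
      _ = 2 * lam n * ∑ l, |γs n l - γf n l| := by rw [← Finset.sum_mul]; ring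
      _ ≤ 2 * lam n * ∑ l, (|γs n l| + |γf n l|) := by
          refine mul_le_mul_of_nonneg_left (Finset.sum_le_sum fun l _ => abs_sub _ _) ?_
          nlinarith [hlam n]
      _ = 2 * (lam n * ∑ j, |γs n j| + lam n * ∑ j, |γf n j|) := by
          rw [Finset.sum_add_distrib]; ring
  have hg : Tendsto (fun n => 2 * (lam n * ∑ j, |γs n j| + lam n * ∑ j, |γf n j|))
      atTop (nhds 0) := by
    have := (hγs2.add hγf2).const_mul 2
    simpa using this
  exact tendsto_of_tendsto_of_tendsto_of_le_of_le tendsto_const_nhds hg hlb hub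
end
end

section
/- Suppose (γ♯, λ♯) is an eligible pair. Let λ_Lasso = λ_Lasso(n) > λ♯ satisfy λ_Lasso‖γ♯‖₁ → 0, and let γ_Lasso be a minimizer over c ∈ ℝ^{p−1} of the noiseless Lasso objective E(x₁ − x_{-1}c)² + 2λ_Lasso‖c‖₁, where E(x₁ − x_{-1}c)² = 1 − 2γ⁰ᵀΣ_{-1,-1}c + cᵀΣ_{-1,-1}c. Then (γ_Lasso − γ♯)ᵀΣ_{-1,-1}(γ_Lasso − γ♯) → 0 as n → ∞. If in addition λ_Lasso ≥ 2λ♯ for all n, then (γ_Lasso, λ_Lasso) is an eligible pair. -/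
open Filter Matrix

noncomputable section

/-- Swap a symmetric bilinear form. -/
lemma symm_swap_aux {q : ℕ} {M : Matrix (Fin q) (Fin q) ℝ} (hM : M.IsSymm) (x y : Fin q → ℝ) :
    x ⬝ᵥ (M *ᵥ y) = y ⬝ᵥ (M *ᵥ x) := by
  rw [Matrix.dotProduct_mulVec, ← Matrix.mulVec_transpose, hM.eq, dotProduct_comm]

/-- Expansion of a symmetric quadratic form along a sum. -/
lemma expand_quad_aux {q : ℕ} {M : Matrix (Fin q) (Fin q) ℝ} (hM : M.IsSymm) (x y : Fin q → ℝ) :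
    (fun l => x l + y l) ⬝ᵥ (M *ᵥ fun l => x l + y l)
      = x ⬝ᵥ (M *ᵥ x) + 2 * (y ⬝ᵥ (M *ᵥ x)) + y ⬝ᵥ (M *ᵥ y) := by
  have h : (fun l => x l + y l) = x + y := rfl
  rw [h, Matrix.mulVec_add, dotProduct_add, add_dotProduct,
    add_dotProduct, symm_swap_aux hM x y]
  ring

/-- The quadratic form of the lower-right block of a positive definite matrix is nonnegative. -/
lemma minor_quad_nonneg_aux {q : ℕ} {Sig : Matrix (Fin (q+1)) (Fin (q+1)) ℝ} (h : Sig.PosDef)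
    (x : Fin q → ℝ) : 0 ≤ x ⬝ᵥ (minorMat Sig *ᵥ x) := by
  have key : x ⬝ᵥ (minorMat Sig *ᵥ x)
      = (Fin.cons 0 x : Fin (q+1) → ℝ) ⬝ᵥ (Sig *ᵥ Fin.cons 0 x) := by
    simp [dotProduct, Matrix.mulVec, minorMat, Fin.sum_univ_succ]
  rw [key]
  simpa using h.posSemidef.dotProduct_mulVec_nonneg (Fin.cons 0 x)

/-- The basic inequality from minimality of the Lasso objective at `γL`, compared to `γs`. -/
lemma key_ineq_aux {q : ℕ} {M : Matrix (Fin q) (Fin q) ℝ} (hM : M.IsSymm)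
    {γ0 γs γL : Fin q → ℝ} {lam lamL : ℝ} (hlam : 0 < lam)
    (h1 : ∀ j, |(M *ᵥ (fun l => γs l - γ0 l)) j| ≤ lam)
    (hmin : (1 - 2 * (γ0 ⬝ᵥ (M *ᵥ γL)) + γL ⬝ᵥ (M *ᵥ γL)) + 2 * lamL * ∑ j, |γL j|
          ≤ (1 - 2 * (γ0 ⬝ᵥ (M *ᵥ γs)) + γs ⬝ᵥ (M *ᵥ γs)) + 2 * lamL * ∑ j, |γs j|) :
    (fun l => γL l - γs l) ⬝ᵥ (M *ᵥ (fun l => γL l - γs l)) + 2 * lamL * ∑ j, |γL j|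
      ≤ 2 * lam * ((∑ j, |γL j|) + ∑ j, |γs j|) + 2 * lamL * ∑ j, |γs j| := by
  set δ : Fin q → ℝ := fun l => γL l - γs l with hδ
  set ds : Fin q → ℝ := fun l => γs l - γ0 l with hds
  have hL : γL = fun l => γs l + δ l := by funext l; simp [hδ]
  have hcross : |δ ⬝ᵥ (M *ᵥ ds)| ≤ lam * ((∑ j, |γL j|) + ∑ j, |γs j|) := by
    calc |δ ⬝ᵥ (M *ᵥ ds)| ≤ ∑ j, |δ j * (M *ᵥ ds) j| := Finset.abs_sum_le_sum_abs _ _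
    _ ≤ ∑ j, |δ j| * lam := by
        refine Finset.sum_le_sum fun j _ => ?_
        rw [abs_mul]
        exact mul_le_mul_of_nonneg_left (h1 j) (abs_nonneg _)
    _ = lam * ∑ j, |δ j| := by rw [← Finset.sum_mul]; ring
    _ ≤ lam * ((∑ j, |γL j|) + ∑ j, |γs j|) := by
        refine mul_le_mul_of_nonneg_left ?_ hlam.le
        rw [← Finset.sum_add_distrib]
        refine Finset.sum_le_sum fun j _ => ?_
        simpa [hδ] using abs_sub (γL j) (γs j)
  have e1 : γL ⬝ᵥ (M *ᵥ γL) = γs ⬝ᵥ (M *ᵥ γs) + 2 * (δ ⬝ᵥ (M *ᵥ γs)) + δ ⬝ᵥ (M *ᵥ δ) := by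
    rw [hL]; exact expand_quad_aux hM γs δ
  have e2 : γ0 ⬝ᵥ (M *ᵥ γL) = γ0 ⬝ᵥ (M *ᵥ γs) + δ ⬝ᵥ (M *ᵥ γ0) := by
    rw [hL]
    have h : (fun l => γs l + δ l) = γs + δ := rfl
    rw [h, Matrix.mulVec_add, dotProduct_add, symm_swap_aux hM γ0 δ]
  have e3 : δ ⬝ᵥ (M *ᵥ ds) = δ ⬝ᵥ (M *ᵥ γs) - δ ⬝ᵥ (M *ᵥ γ0) := by
    have h : ds = γs - γ0 := rfl
    rw [h, Matrix.mulVec_sub, dotProduct_sub]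
  have habs := abs_le.1 hcross
  rw [e1, e2] at hmin
  have hlow := habs.1
  rw [e3] at hlow
  linarith

/-- KKT-type bound for a minimizer of the noiseless Lasso objective. -/
lemma kkt_aux {q : ℕ} {M : Matrix (Fin q) (Fin q) ℝ} (hM : M.IsSymm) (hMjj : ∀ j, M j j = 1)
    {γ0 γL : Fin q → ℝ} {lamL : ℝ} (hlamL : 0 < lamL)
    (hmin : ∀ c : Fin q → ℝ,
        (1 - 2 * (γ0 ⬝ᵥ (M *ᵥ γL)) + γL ⬝ᵥ (M *ᵥ γL)) + 2 * lamL * ∑ j, |γL j|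
          ≤ (1 - 2 * (γ0 ⬝ᵥ (M *ᵥ c)) + c ⬝ᵥ (M *ᵥ c)) + 2 * lamL * ∑ j, |c j|) :
    ∀ j, |(M *ᵥ (fun l => γL l - γ0 l)) j| ≤ lamL := by
  intro j
  set g : ℝ := (M *ᵥ (fun l => γL l - γ0 l)) j with hg
  have main : ∀ t : ℝ, 0 ≤ 2 * t * g + t ^ 2 + 2 * lamL * |t| := by
    intro t
    set e : Fin q → ℝ := fun l => t * (Pi.single (M := fun _ : Fin q => ℝ) j 1) l with he
    have hmt := hmin (fun l => γL l + e l)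
    have e1 : (fun l => γL l + e l) ⬝ᵥ (M *ᵥ fun l => γL l + e l)
        = γL ⬝ᵥ (M *ᵥ γL) + 2 * (e ⬝ᵥ (M *ᵥ γL)) + e ⬝ᵥ (M *ᵥ e) :=
      expand_quad_aux hM γL e
    have eMv : ∀ v : Fin q → ℝ, e ⬝ᵥ (M *ᵥ v) = t * (M *ᵥ v) j := by
      intro v
      simp [he, dotProduct, Pi.single_apply, mul_assoc, ite_mul, Finset.mul_sum]
    have eMe : e ⬝ᵥ (M *ᵥ e) = t ^ 2 := by
      have hMe : M *ᵥ e = fun i => t * M i j := by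
        funext i
        simp [he, Matrix.mulVec, dotProduct, Pi.single_apply, mul_comm, Finset.mul_sum,
          mul_assoc]
      rw [hMe]
      simp only [he, dotProduct]
      rw [Finset.sum_eq_single j]
      · rw [hMjj j]; simp [Pi.single_apply]; ring
      · intro i _ hij; simp [Pi.single_apply, hij]
      · simp
    have e2 : γ0 ⬝ᵥ (M *ᵥ fun l => γL l + e l) = γ0 ⬝ᵥ (M *ᵥ γL) + t * (M *ᵥ γ0) j := by
      have h : (fun l => γL l + e l) = γL + e := rfl
      rw [h, Matrix.mulVec_add, dotProduct_add, symm_swap_aux hM γ0 e, eMv]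
    have pen : ∑ l, |γL l + e l| ≤ (∑ l, |γL l|) + |t| := by
      have h1 : ∀ l, |γL l + e l| ≤ |γL l| + |e l| := fun l => abs_add_le _ _
      have h2 : ∑ l, |e l| = if (j ∈ (Finset.univ : Finset (Fin q))) then |t| else 0 := by
        rw [← Finset.sum_ite_eq' Finset.univ j (fun _ => |t|)]
        refine Finset.sum_congr rfl fun i _ => ?_
        by_cases hij : i = j <;> simp [he, Pi.single_apply, hij]
      calc ∑ l, |γL l + e l| ≤ ∑ l, (|γL l| + |e l|) := Finset.sum_le_sum fun l _ => h1 l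
      _ = (∑ l, |γL l|) + ∑ l, |e l| := Finset.sum_add_distrib
      _ ≤ (∑ l, |γL l|) + |t| := by rw [h2]; simp
    have hgsplit : g = (M *ᵥ γL) j - (M *ᵥ γ0) j := by
      rw [hg]
      have h : (fun l => γL l - γ0 l) = γL - γ0 := rfl
      rw [h, Matrix.mulVec_sub]
      rfl
    rw [e1, e2, eMv, eMe] at hmt
    have hpen2 : 2 * lamL * ∑ l, |γL l + e l| ≤ 2 * lamL * ((∑ l, |γL l|) + |t|) :=
      mul_le_mul_of_nonneg_left pen (by linarith)
    have hgt : t * g = t * (M *ᵥ γL) j - t * (M *ᵥ γ0) j := by rw [hgsplit]; ring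
    have this2 : 2 * lamL * ((∑ l, |γL l|) + |t|)
        = 2 * lamL * (∑ l, |γL l|) + 2 * lamL * |t| := by ring
    linarith [hmt, hpen2, hgt, this2]
  by_contra hcon
  push_neg at hcon
  set ε : ℝ := |g| - lamL with hε
  have hε0 : 0 < ε := by simp [hε]; linarith
  rcases le_or_gt 0 g with hg0 | hg0
  · have hm := main (-ε)
    have hab : |(-ε)| = ε := by rw [abs_neg, abs_of_pos hε0]
    rw [hab] at hm
    have hgabs : |g| = g := abs_of_nonneg hg0
    nlinarith
  · have hm := main ε
    have hab : |ε| = ε := abs_of_pos hε0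
    rw [hab] at hm
    have hgabs : |g| = -g := abs_of_neg hg0
    nlinarith

/-- if `(γ♯, λ♯)` is eligible, `λ_Lasso > λ♯` with `λ_Lasso ‖γ♯‖₁ → 0`, and
`γ_Lasso` minimizes the noiseless Lasso objective
`E(x₁ - x_{-1} c)² + 2 λ_Lasso ‖c‖₁` (with `E(x₁ - x_{-1} c)² = 1 - 2 γ⁰ᵀΣ_{-1,-1}c + cᵀΣ_{-1,-1}c`),
then `(γ_Lasso - γ♯)ᵀ Σ_{-1,-1} (γ_Lasso - γ♯) → 0`; if moreover `λ_Lasso ≥ 2λ♯` then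
`(γ_Lasso, λ_Lasso)` is an eligible pair. -/
theorem noiseless_lasso_finds_eligible_pair
    (k : ℕ → ℕ) (hk : ∀ n, 1 ≤ k n)
    (Sig : ∀ n, Matrix (Fin (k n + 1)) (Fin (k n + 1)) ℝ)
    (hsymm : ∀ n, (Sig n).IsSymm)
    (hpos : ∀ n, (Sig n).PosDef)
    (hdiag : ∀ n, ∀ i, Sig n i i = 1)
    (γ0 : ∀ n, Fin (k n) → ℝ)
    (hγ0 : ∀ n, minorMat (Sig n) *ᵥ γ0 n = fun j => Sig n j.succ 0)
    -- the eligible pair (γ♯, λ♯)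
    (lam : ℕ → ℝ) (hlam : ∀ n, 0 < lam n)
    (γs : ∀ n, Fin (k n) → ℝ)
    (hγs1 : ∀ n j, |(minorMat (Sig n) *ᵥ (fun l => γs n l - γ0 n l)) j| ≤ lam n)
    (hγs2 : Tendsto (fun n => lam n * ∑ j, |γs n j|) atTop (nhds 0))
    -- the Lasso tuning parameter
    (lamL : ℕ → ℝ) (hlamL : ∀ n, lam n < lamL n)
    (hlamLγ : Tendsto (fun n => lamL n * ∑ j, |γs n j|) atTop (nhds 0))
    -- γ_Lasso : a minimizer of the noiseless Lasso objective
    (γL : ∀ n, Fin (k n) → ℝ)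
    (hminL : ∀ n (c : Fin (k n) → ℝ),
        (1 - 2 * (γ0 n ⬝ᵥ (minorMat (Sig n) *ᵥ γL n)) + γL n ⬝ᵥ (minorMat (Sig n) *ᵥ γL n))
            + 2 * lamL n * ∑ j, |γL n j|
          ≤ (1 - 2 * (γ0 n ⬝ᵥ (minorMat (Sig n) *ᵥ c)) + c ⬝ᵥ (minorMat (Sig n) *ᵥ c))
            + 2 * lamL n * ∑ j, |c j|) :
    Tendsto (fun n => (fun l => γL n l - γs n l) ⬝ᵥ
        (minorMat (Sig n) *ᵥ (fun l => γL n l - γs n l))) atTop (nhds 0) ∧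
    ((∀ n, 2 * lam n ≤ lamL n) →
      (∀ n j, |(minorMat (Sig n) *ᵥ (fun l => γL n l - γ0 n l)) j| ≤ lamL n) ∧
        Tendsto (fun n => lamL n * ∑ j, |γL n j|) atTop (nhds 0)) := by
  have hMsymm : ∀ n, (minorMat (Sig n)).IsSymm := fun n => (hsymm n).submatrix Fin.succ
  have hlamL0 : ∀ n, 0 < lamL n := fun n => (hlam n).trans (hlamL n)
  have hsum_s : ∀ n, 0 ≤ ∑ j, |γs n j| := fun n => Finset.sum_nonneg fun j _ => abs_nonneg _
  have hsum_L : ∀ n, 0 ≤ ∑ j, |γL n j| := fun n => Finset.sum_nonneg fun j _ => abs_nonneg _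
  have hQ : ∀ n, 0 ≤ (fun l => γL n l - γs n l) ⬝ᵥ
      (minorMat (Sig n) *ᵥ fun l => γL n l - γs n l) :=
    fun n => minor_quad_nonneg_aux (hpos n) _
  have hkey : ∀ n, (fun l => γL n l - γs n l) ⬝ᵥ
        (minorMat (Sig n) *ᵥ fun l => γL n l - γs n l) + 2 * lamL n * ∑ j, |γL n j|
      ≤ 2 * lam n * ((∑ j, |γL n j|) + ∑ j, |γs n j|) + 2 * lamL n * ∑ j, |γs n j| :=
    fun n => key_ineq_aux (hMsymm n) (hlam n) (hγs1 n) (hminL n (γs n))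
  have hlim4 : Tendsto (fun n => 4 * (lamL n * ∑ j, |γs n j|)) atTop (nhds 0) := by
    simpa using hlamLγ.const_mul 4
  constructor
  · refine squeeze_zero hQ (fun n => ?_) hlim4
    have ha : 0 ≤ (lamL n - lam n) * ∑ j, |γL n j| :=
      mul_nonneg (by linarith [hlamL n]) (hsum_L n)
    have hb : 0 ≤ (lamL n - lam n) * ∑ j, |γs n j| :=
      mul_nonneg (by linarith [hlamL n]) (hsum_s n)
    nlinarith [hkey n, ha, hb]
  · intro h2
    refine ⟨fun n => kkt_aux (hMsymm n) (fun j => by simp [minorMat, hdiag n]) (hlamL0 n)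
      (hminL n), ?_⟩
    refine squeeze_zero (fun n => mul_nonneg (hlamL0 n).le (hsum_L n)) (fun n => ?_) hlim4
    have ha : 0 ≤ (lamL n - 2 * lam n) * ∑ j, |γL n j| :=
      mul_nonneg (by linarith [h2 n]) (hsum_L n)
    have hb : 0 ≤ (lamL n - lam n) * ∑ j, |γs n j| :=
      mul_nonneg (by linarith [hlamL n]) (hsum_s n)
    have hc : 0 ≤ (lamL n - 2 * lam n) * ∑ j, |γs n j| :=
      mul_nonneg (by linarith [h2 n]) (hsum_s n)
    nlinarith [hkey n, hQ n, ha, hb, hc]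
end
end

section
/- Suppose γ♯ ∈ ℝ^{p−1} is supported on a set S ⊆ {2,…,p} of cardinality s = s(n) (i.e. γ♯_j = 0 for j ∉ S) and satisfies ‖Σ_{-1,-1}(γ♯ − γ⁰)‖_∞ ≤ λ♯ for all n. Let γ_S^S := Σ_{S,S}^{-1}(Σ_{j,1})_{j∈S} be the coefficients of the projection of x₁ on x_S. If λ♯√s → 0 as n → ∞, then λ♯‖γ♯‖₁ → 0 (so (γ♯, λ♯) is an eligible pair), ‖Σ_{-1,-1}^{1/2}(γ^S − γ♯)‖₂² ≤ s λ♯² / Λ_min² → 0 where γ^S is the zero-extension of γ_S^S, and (1 − γ⁰ᵀΣ_{-1,-1}γ♯) − E(x₁ − x_S γ_S^S)² → 0, where E(x₁ − x_S γ_S^S)² = 1 − (Σ_{1,j})_{j∈S} Σ_{S,S}^{-1} (Σ_{j,1})_{j∈S}. -/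
open Filter Matrix

noncomputable section

/-- The subvector `(Σ_{j,1})_{j ∈ S}` of the first column of `Σ`. -/
def colS {q : ℕ} (Sig : Matrix (Fin (q + 1)) (Fin (q + 1)) ℝ) (S : Finset (Fin q)) :
    {l : Fin q // l ∈ S} → ℝ :=
  fun i => Sig i.val.succ 0

/-- Coefficients `γ_S^S := Σ_{S,S}^{-1} (Σ_{j,1})_{j∈S}` of the projection of `x₁` on `x_S`,
extended by zero off `S`. -/
noncomputable def projColCoef {q : ℕ} (Sig : Matrix (Fin (q + 1)) (Fin (q + 1)) ℝ)
    (S : Finset (Fin q)) : Fin q → ℝ :=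
  fun j =>
    if h : j ∈ S then
      ((((minorMat Sig).submatrix (Subtype.val : {l : Fin q // l ∈ S} → Fin q)
            (Subtype.val : {l : Fin q // l ∈ S} → Fin q))⁻¹) *ᵥ colS Sig S) ⟨j, h⟩
    else 0

open scoped MatrixOrder in
lemma psd_cs {ι : Type*} [Fintype ι] [DecidableEq ι] {M : Matrix ι ι ℝ}
    (hM : M.PosSemidef) (x y : ι → ℝ) :
    (x ⬝ᵥ M *ᵥ y) ^ 2 ≤ (x ⬝ᵥ M *ᵥ x) * (y ⬝ᵥ M *ᵥ y) := by
  suffices h : ∀ (M' : Matrix ι ι ℝ) (B : Matrix ι ι ℝ), Bᵀ = B → B * B = M' →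
      (x ⬝ᵥ M' *ᵥ y) ^ 2 ≤ (x ⬝ᵥ M' *ᵥ x) * (y ⬝ᵥ M' *ᵥ y) by
    have h0 : 0 ≤ M := nonneg_iff_posSemidef.mpr hM
    refine h M (CFC.sqrt M) ?_ (CFC.sqrt_mul_sqrt_self M h0)
    rw [← conjTranspose_eq_transpose_of_trivial]; exact (nonneg_iff_posSemidef.mp (CFC.sqrt_nonneg M)).isHermitian
  rintro M' B hBt rfl
  have key : ∀ u v : ι → ℝ, u ⬝ᵥ (B * B) *ᵥ v = (B *ᵥ u) ⬝ᵥ (B *ᵥ v) := by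
    intro u v
    rw [← mulVec_mulVec, dotProduct_mulVec, ← mulVec_transpose, hBt]
  rw [key, key, key]
  have := Finset.sum_mul_sq_le_sq_mul_sq Finset.univ (B *ᵥ x) (B *ᵥ y)
  simpa [dotProduct, pow_two] using this

lemma quad_lower {ι : Type*} [Fintype ι] [Nonempty ι] [DecidableEq ι]
    {M : Matrix ι ι ℝ} (hM : M.IsHermitian) (x : ι → ℝ) :
    (⨅ i, hM.eigenvalues i) * (x ⬝ᵥ x) ≤ x ⬝ᵥ M *ᵥ x := by
  set U : Matrix ι ι ℝ := (hM.eigenvectorUnitary : Matrix ι ι ℝ) with hU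
  have hUU : U * star U = 1 := (Unitary.mem_iff.mp hM.eigenvectorUnitary.2).2
  have hstar : star U = Uᵀ := by
    rw [Matrix.star_eq_conjTranspose, conjTranspose_eq_transpose_of_trivial]
  have hspec : M = U * diagonal hM.eigenvalues * Uᵀ := by
    have := hM.spectral_theorem
    rw [← hstar]; simpa using this
  have hdot : ∀ w : ι → ℝ, x ⬝ᵥ (U *ᵥ w) = (Uᵀ *ᵥ x) ⬝ᵥ w := by
    intro w
    rw [dotProduct_mulVec, ← mulVec_transpose]
  set y := Uᵀ *ᵥ x with hy
  have h1 : x ⬝ᵥ M *ᵥ x = y ⬝ᵥ (diagonal hM.eigenvalues *ᵥ y) := by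
    conv_lhs => rw [hspec]
    rw [← mulVec_mulVec, ← mulVec_mulVec, hdot]
  have h2 : x ⬝ᵥ x = y ⬝ᵥ y := by
    have : x ⬝ᵥ ((U * Uᵀ) *ᵥ x) = y ⬝ᵥ y := by
      rw [← mulVec_mulVec, hdot]
    rw [← this, ← hstar, hUU, one_mulVec]
  set Λ := ⨅ i, hM.eigenvalues i with hΛ
  have hle : ∀ i, Λ ≤ hM.eigenvalues i := fun i =>
    ciInf_le (Set.Finite.bddBelow (Set.finite_range _)) i
  rw [h1, h2]
  have key : ∀ i, Λ * (y i * y i) ≤ y i * (hM.eigenvalues i * y i) := by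
    intro i
    have h := mul_le_mul_of_nonneg_right (hle i) (mul_self_nonneg (y i))
    nlinarith [h]
  calc Λ * (y ⬝ᵥ y) = ∑ i, Λ * (y i * y i) := by
        simp [dotProduct, Finset.mul_sum]
    _ ≤ ∑ i, y i * (hM.eigenvalues i * y i) := Finset.sum_le_sum fun i _ => key i
    _ = y ⬝ᵥ (diagonal hM.eigenvalues *ᵥ y) := by
        simp [dotProduct, mulVec_diagonal]

def extS {q : ℕ} (S : Finset (Fin q)) (x : {l : Fin q // l ∈ S} → ℝ) : Fin q → ℝ :=
  fun j => if h : j ∈ S then x ⟨j, h⟩ else 0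

lemma extS_dotProduct {q : ℕ} (S : Finset (Fin q)) (x : {l : Fin q // l ∈ S} → ℝ)
    (w : Fin q → ℝ) : extS S x ⬝ᵥ w = ∑ i : {l : Fin q // l ∈ S}, x i * w i.val := by
  classical
  rw [dotProduct]
  rw [← Finset.sum_subset (Finset.subset_univ S) (fun j _ hj => by simp [extS, hj])]
  rw [← Finset.sum_coe_sort S (fun j => extS S x j * w j)]
  exact Finset.sum_congr rfl fun i _ => by simp [extS, i.2]

lemma extS_mulVec {q : ℕ} (A : Matrix (Fin q) (Fin q) ℝ) (S : Finset (Fin q))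
    (x : {l : Fin q // l ∈ S} → ℝ) (j : Fin q) (hj : j ∈ S) :
    (A *ᵥ extS S x) j
      = ((A.submatrix (Subtype.val : {l : Fin q // l ∈ S} → Fin q) Subtype.val) *ᵥ x) ⟨j, hj⟩ := by
  classical
  have h0 : (A *ᵥ extS S x) j = extS S x ⬝ᵥ (fun l => A j l) := by
    rw [mulVec, dotProduct_comm]
  rw [h0, extS_dotProduct]
  rw [mulVec, dotProduct]
  exact Finset.sum_congr rfl fun i _ => by simp [submatrix, mul_comm]

lemma eq_extS {q : ℕ} (S : Finset (Fin q)) (v : Fin q → ℝ) (hv : ∀ j ∉ S, v j = 0) :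
    v = extS S (fun i => v i.val) := by
  funext j
  by_cases h : j ∈ S <;> simp [extS, h, hv j]

lemma cons_quad_zero {q : ℕ} (M : Matrix (Fin (q + 1)) (Fin (q + 1)) ℝ) (v : Fin q → ℝ) :
    (Fin.cons 0 v : Fin (q+1) → ℝ) ⬝ᵥ M *ᵥ (Fin.cons 0 v) = v ⬝ᵥ (minorMat M *ᵥ v) := by
  simp [dotProduct, mulVec, Fin.sum_univ_succ, minorMat, dotProduct]

lemma cons_quad_neg_one {q : ℕ} (M : Matrix (Fin (q + 1)) (Fin (q + 1)) ℝ)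
    (hsymm : M.IsSymm) (hd : M 0 0 = 1) (γ : Fin q → ℝ)
    (hγ : minorMat M *ᵥ γ = fun j => M j.succ 0) :
    (Fin.cons (-1) γ : Fin (q+1) → ℝ) ⬝ᵥ M *ᵥ (Fin.cons (-1) γ)
      = 1 - γ ⬝ᵥ (minorMat M *ᵥ γ) := by
  have hb : ∀ j : Fin q, (minorMat M *ᵥ γ) j = M j.succ 0 := fun j => by rw [hγ]
  have hsym : ∀ i j, M i j = M j i := fun i j => hsymm.apply j i
  have hz : ∀ j : Fin q, (M *ᵥ (Fin.cons (-1) γ : Fin (q+1) → ℝ)) j.succ = 0 := by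
    intro j
    have h1 : (M *ᵥ (Fin.cons (-1) γ : Fin (q+1) → ℝ)) j.succ
        = -(M j.succ 0) + (minorMat M *ᵥ γ) j := by
      simp [mulVec, dotProduct, Fin.sum_univ_succ, minorMat]
    rw [h1, hb]; ring
  have h0 : (M *ᵥ (Fin.cons (-1) γ : Fin (q+1) → ℝ)) 0
      = -1 + ∑ j, M 0 j.succ * γ j := by
    simp [mulVec, dotProduct, Fin.sum_univ_succ, hd]
  have hsum : ∑ j, M 0 j.succ * γ j = γ ⬝ᵥ (minorMat M *ᵥ γ) := by
    rw [dotProduct]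
    exact Finset.sum_congr rfl fun j _ => by rw [hb, hsym 0 j.succ, mul_comm]
  rw [dotProduct, Fin.sum_univ_succ]
  simp only [Fin.cons_zero, Fin.cons_succ, hz, mul_zero, Finset.sum_const_zero, add_zero]
  rw [h0, hsum]; ring

-- THE CORE LEMMA
set_option maxHeartbeats 2000000 in
lemma core {q : ℕ} (Sg : Matrix (Fin (q+1)) (Fin (q+1)) ℝ)
    (hsymm : Sg.IsSymm) (hpos : Sg.PosDef) (hdiag : ∀ i, Sg i i = 1)
    (c₀ : ℝ) (hc₀ : 0 < c₀) (heig : ∀ i, c₀ ≤ hpos.1.eigenvalues i)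
    (γ0 : Fin q → ℝ) (hγ0 : minorMat Sg *ᵥ γ0 = fun j => Sg j.succ 0)
    (S : Finset (Fin q)) (lam : ℝ) (hlam : 0 < lam)
    (γ : Fin q → ℝ) (hsupp : ∀ j, j ∉ S → γ j = 0)
    (hE1 : ∀ j, |(minorMat Sg *ᵥ (fun l => γ l - γ0 l)) j| ≤ lam) :
    lam * ∑ j, |γ j| ≤ lam * Real.sqrt S.card / Real.sqrt c₀
        + (lam * Real.sqrt S.card) * (lam * Real.sqrt S.card) / c₀ ∧
    ((fun l => projColCoef Sg S l - γ l) ⬝ᵥ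
        (minorMat Sg *ᵥ (fun l => projColCoef Sg S l - γ l))
        ≤ (S.card : ℝ) * lam ^ 2 / (⨅ i, hpos.1.eigenvalues i)) ∧
    (0 ≤ (fun l => projColCoef Sg S l - γ l) ⬝ᵥ
        (minorMat Sg *ᵥ (fun l => projColCoef Sg S l - γ l))) ∧
    ((fun l => projColCoef Sg S l - γ l) ⬝ᵥ
        (minorMat Sg *ᵥ (fun l => projColCoef Sg S l - γ l))
        ≤ (lam * Real.sqrt S.card) * (lam * Real.sqrt S.card) / c₀) ∧
    |(1 - γ0 ⬝ᵥ (minorMat Sg *ᵥ γ)) -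
        (1 - colS Sg S ⬝ᵥ
          ((((minorMat Sg).submatrix (Subtype.val : {l : Fin q // l ∈ S} → Fin q)
              (Subtype.val : {l : Fin q // l ∈ S} → Fin q))⁻¹) *ᵥ colS Sg S))|
        ≤ lam * Real.sqrt S.card / Real.sqrt c₀ := by
  classical
  set A := minorMat Sg with hA
  set Λ := ⨅ i, hpos.1.eigenvalues i with hΛdef
  have hc₀Λ : c₀ ≤ Λ := le_ciInf heig
  have hΛpos : 0 < Λ := lt_of_lt_of_le hc₀ hc₀Λ
  -- quadratic lower bounds
  have hquadSig : ∀ x : Fin (q+1) → ℝ, Λ * (x ⬝ᵥ x) ≤ x ⬝ᵥ Sg *ᵥ x := quad_lower hpos.1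
  have hconsdot : ∀ v : Fin q → ℝ,
      (Fin.cons 0 v : Fin (q+1) → ℝ) ⬝ᵥ (Fin.cons 0 v : Fin (q+1) → ℝ) = v ⬝ᵥ v := by
    intro v; simp [dotProduct, Fin.sum_univ_succ]
  have hquadA : ∀ v : Fin q → ℝ, Λ * (v ⬝ᵥ v) ≤ v ⬝ᵥ A *ᵥ v := by
    intro v
    have h1 := hquadSig (Fin.cons 0 v)
    rwa [cons_quad_zero, hconsdot] at h1
  have hAsymmT : Aᵀ = A := by
    ext i j; exact hsymm.apply i.succ j.succ
  have hAh : A.IsHermitian := by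
    rw [Matrix.IsHermitian, conjTranspose_eq_transpose_of_trivial, hAsymmT]
  have hApos : A.PosDef := by
    refine PosDef.of_dotProduct_mulVec_pos hAh fun v hv => ?_
    have hnn : 0 ≤ v ⬝ᵥ v := Finset.sum_nonneg fun i _ => mul_self_nonneg _
    have hvv : 0 < v ⬝ᵥ v := by
      rcases hnn.eq_or_lt with h | h
      · exact absurd (dotProduct_self_eq_zero.mp h.symm) hv
      · exact h
    have := hquadA v
    have hsv : star v = v := funext fun i => star_trivial _
    rw [hsv]
    linarith [mul_pos hΛpos hvv]
  have hApsd := hApos.posSemidef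
  -- the S-block
  set ASS := A.submatrix (Subtype.val : {l : Fin q // l ∈ S} → Fin q)
      (Subtype.val : {l : Fin q // l ∈ S} → Fin q) with hASS
  have hquadSS : ∀ x y : {l : Fin q // l ∈ S} → ℝ,
      extS S x ⬝ᵥ (A *ᵥ extS S y) = x ⬝ᵥ ASS *ᵥ y := by
    intro x y
    rw [extS_dotProduct, dotProduct]
    refine Finset.sum_congr rfl fun i _ => ?_
    rw [extS_mulVec A S y i.val i.2]
  have hASSpos : ASS.PosDef := by
    refine PosDef.of_dotProduct_mulVec_pos (hAh.submatrix _) fun x hx => ?_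
    have hsx : star x = x := funext fun i => star_trivial _
    rw [hsx, ← hquadSS]
    have hne : extS S x ≠ 0 := by
      intro hcon
      obtain ⟨i, hi⟩ := Function.ne_iff.mp hx
      apply hi
      have h2 : extS S x i.val = 0 := by rw [hcon]; rfl
      simpa [extS, i.2] using h2
    have := hApos.dotProduct_mulVec_pos hne
    rwa [show star (extS S x) = extS S x from funext fun i => star_trivial _] at this
  have hdet : IsUnit ASS.det := hASSpos.isUnit.map detMonoidHom
  -- the projection coefficients
  set cS := ASS⁻¹ *ᵥ colS Sg S with hcS
  have hmul : ASS * ASS⁻¹ = 1 := mul_nonsing_inv _ hdet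
  have hAcS : ASS *ᵥ cS = colS Sg S := by
    rw [hcS, mulVec_mulVec, hmul, one_mulVec]
  have hγS : projColCoef Sg S = extS S cS := rfl
  -- the difference vector δ
  set δ := fun l => projColCoef Sg S l - γ l with hδ
  have hδsupp : ∀ j ∉ S, δ j = 0 := by
    intro j hj
    simp [hδ, projColCoef, hj, hsupp j hj]
  set dS := fun i : {l : Fin q // l ∈ S} => δ i.val with hdS
  have hδe : δ = extS S dS := eq_extS S δ hδsupp
  have hAδ : ∀ j, j ∈ S → (A *ᵥ δ) j = -((A *ᵥ (fun l => γ l - γ0 l)) j) := by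
    intro j hj
    have h1 : A *ᵥ δ = A *ᵥ projColCoef Sg S - A *ᵥ γ := by
      rw [show δ = projColCoef Sg S - γ from rfl, mulVec_sub]
    have h2 : (A *ᵥ projColCoef Sg S) j = colS Sg S ⟨j, hj⟩ := by
      rw [hγS, extS_mulVec A S cS j hj, hAcS]
    have h3 : A *ᵥ (fun l => γ l - γ0 l) = A *ᵥ γ - A *ᵥ γ0 := by
      rw [show (fun l => γ l - γ0 l) = γ - γ0 from rfl, mulVec_sub]
    have h4 : (A *ᵥ γ0) j = colS Sg S ⟨j, hj⟩ := by rw [hγ0]; rfl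
    rw [h1, h3]
    simp only [Pi.sub_apply, h2, h4]
    ring
  set Q := δ ⬝ᵥ (A *ᵥ δ) with hQ
  have hQsum : Q = ∑ i : {l : Fin q // l ∈ S}, dS i * (A *ᵥ δ) i.val := by
    have h5 := extS_dotProduct S dS (A *ᵥ δ)
    rw [← hδe] at h5
    exact h5
  have hQle : Q ≤ lam * ∑ i : {l : Fin q // l ∈ S}, |dS i| := by
    rw [hQsum, Finset.mul_sum]
    refine Finset.sum_le_sum fun i _ => ?_
    rw [hAδ i.val i.2]
    have h5 := hE1 i.val
    calc dS i * -((A *ᵥ fun l => γ l - γ0 l) i.val)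
        ≤ |dS i * -((A *ᵥ fun l => γ l - γ0 l) i.val)| := le_abs_self _
      _ = |dS i| * |(A *ᵥ fun l => γ l - γ0 l) i.val| := by rw [abs_mul, abs_neg]
      _ ≤ |dS i| * lam := mul_le_mul_of_nonneg_left h5 (abs_nonneg _)
      _ = lam * |dS i| := mul_comm _ _
  have hDnn : 0 ≤ δ ⬝ᵥ δ := Finset.sum_nonneg fun i _ => mul_self_nonneg _
  have hQD : Λ * (δ ⬝ᵥ δ) ≤ Q := hquadA δ
  have hQnn : 0 ≤ Q := le_trans (mul_nonneg hΛpos.le hDnn) hQD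
  have hDsum : δ ⬝ᵥ δ = ∑ i : {l : Fin q // l ∈ S}, dS i * dS i := by
    have h5 := extS_dotProduct S dS δ
    rw [← hδe] at h5
    exact h5
  have hL2 : (∑ i : {l : Fin q // l ∈ S}, |dS i|)^2 ≤ (S.card : ℝ) * (δ ⬝ᵥ δ) := by
    have h5 := Finset.sum_mul_sq_le_sq_mul_sq Finset.univ
      (fun i : {l : Fin q // l ∈ S} => |dS i|) (fun _ => (1:ℝ))
    have h6 : ∑ i : {l : Fin q // l ∈ S}, |dS i| * (1:ℝ) = ∑ i, |dS i| := by simp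
    have h7 : ∑ _i : {l : Fin q // l ∈ S}, ((1:ℝ))^2 = (S.card : ℝ) := by
      simp [Finset.card_univ]
    rw [h6, h7] at h5
    calc (∑ i : {l : Fin q // l ∈ S}, |dS i|)^2
        ≤ (∑ i : {l : Fin q // l ∈ S}, |dS i|^2) * (S.card : ℝ) := h5
      _ = (S.card : ℝ) * (δ ⬝ᵥ δ) := by
          rw [hDsum, mul_comm]
          congr 1
          exact Finset.sum_congr rfl fun i _ => by rw [sq_abs, ← pow_two, pow_two]
  have hLnn : 0 ≤ ∑ i : {l : Fin q // l ∈ S}, |dS i| :=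
    Finset.sum_nonneg fun i _ => abs_nonneg _
  -- Conclusion 2 : Q ≤ s λ² / Λ
  have hC2 : Q ≤ (S.card : ℝ) * lam ^ 2 / Λ := by
    rcases hQnn.eq_or_lt with h | hQpos
    · rw [← h]
      positivity
    · rw [le_div_iff₀ hΛpos]
      have hQQ : Q * Q ≤ lam^2 * ((S.card : ℝ) * (δ ⬝ᵥ δ)) := by
        calc Q * Q ≤ (lam * ∑ i : {l : Fin q // l ∈ S}, |dS i|)
              * (lam * ∑ i : {l : Fin q // l ∈ S}, |dS i|) :=
            mul_le_mul hQle hQle hQnn (by positivity)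
          _ = lam^2 * (∑ i : {l : Fin q // l ∈ S}, |dS i|)^2 := by ring
          _ ≤ lam^2 * ((S.card : ℝ) * (δ ⬝ᵥ δ)) :=
            mul_le_mul_of_nonneg_left hL2 (sq_nonneg _)
      have e1 : Λ * (Q*Q) ≤ Λ * (lam^2 * ((S.card : ℝ) * (δ ⬝ᵥ δ))) :=
        mul_le_mul_of_nonneg_left hQQ hΛpos.le
      have e2 : lam^2 * (S.card : ℝ) * (Λ * (δ ⬝ᵥ δ)) ≤ lam^2 * (S.card : ℝ) * Q :=
        mul_le_mul_of_nonneg_left hQD (by positivity)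
      refine le_of_mul_le_mul_right ?_ hQpos
      linarith [e1, e2]
  -- Conclusion 3 : Q ≤ u·u/c₀ where u = lam·√s
  have hsnn : (0:ℝ) ≤ (S.card : ℝ) := Nat.cast_nonneg _
  have husq : lam * Real.sqrt S.card * (lam * Real.sqrt S.card) = (S.card : ℝ) * lam^2 := by
    have h6 : Real.sqrt (S.card:ℝ) * Real.sqrt (S.card:ℝ) = (S.card:ℝ) :=
      Real.mul_self_sqrt hsnn
    linear_combination lam^2 * h6
  have hC3 : Q ≤ lam * Real.sqrt S.card * (lam * Real.sqrt S.card) / c₀ := by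
    rw [husq]
    refine hC2.trans ?_
    exact div_le_div_of_nonneg_left (by positivity) hc₀ hc₀Λ
  -- γ₀-quadratic form is at most 1
  have hQ0nn : 0 ≤ γ0 ⬝ᵥ (A *ᵥ γ0) := by
    have h7 := hApsd.dotProduct_mulVec_nonneg γ0
    rwa [show star γ0 = γ0 from funext fun i => star_trivial _] at h7
  have hQ0le : γ0 ⬝ᵥ (A *ᵥ γ0) ≤ 1 := by
    have h7 := hpos.posSemidef.dotProduct_mulVec_nonneg (Fin.cons (-1) γ0 : Fin (q+1) → ℝ)
    rw [show star (Fin.cons (-1) γ0 : Fin (q+1) → ℝ) = Fin.cons (-1) γ0 from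
      funext fun i => star_trivial _] at h7
    rw [cons_quad_neg_one Sg hsymm (hdiag 0) γ0 hγ0] at h7
    linarith
  -- Conclusion 1
  set gS := fun i : {l : Fin q // l ∈ S} => γ i.val with hgS
  have hγe : γ = extS S gS := eq_extS S γ hsupp
  have habs : ∑ j, |γ j| = ∑ i : {l : Fin q // l ∈ S}, |gS i| := by
    rw [← Finset.sum_subset (Finset.subset_univ S) (fun j _ hj => by simp [hsupp j hj])]
    rw [← Finset.sum_coe_sort S (fun j => |γ j|)]
  set Qγ := γ ⬝ᵥ (A *ᵥ γ) with hQγ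
  have hsplit : Qγ = γ ⬝ᵥ (A *ᵥ γ0) + γ ⬝ᵥ (A *ᵥ (fun l => γ l - γ0 l)) := by
    have h8 : (γ0 + fun l => γ l - γ0 l) = γ := by funext l; simp
    rw [hQγ, ← dotProduct_add, ← mulVec_add, h8]
  have hγh : γ ⬝ᵥ (A *ᵥ (fun l => γ l - γ0 l)) ≤ lam * ∑ i : {l : Fin q // l ∈ S}, |gS i| := by
    have h8 := extS_dotProduct S gS (A *ᵥ (fun l => γ l - γ0 l))
    rw [← hγe] at h8
    rw [h8, Finset.mul_sum]
    refine Finset.sum_le_sum fun i _ => ?_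
    have h9 := hE1 i.val
    calc gS i * (A *ᵥ fun l => γ l - γ0 l) i.val
        ≤ |gS i * (A *ᵥ fun l => γ l - γ0 l) i.val| := le_abs_self _
      _ = |gS i| * |(A *ᵥ fun l => γ l - γ0 l) i.val| := abs_mul _ _
      _ ≤ |gS i| * lam := mul_le_mul_of_nonneg_left h9 (abs_nonneg _)
      _ = lam * |gS i| := mul_comm _ _
  have hcs0 : (γ ⬝ᵥ (A *ᵥ γ0))^2 ≤ Qγ * (γ0 ⬝ᵥ (A *ᵥ γ0)) := psd_cs hApsd γ γ0
  have hγγnn : 0 ≤ γ ⬝ᵥ γ := Finset.sum_nonneg fun i _ => mul_self_nonneg _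
  have hqAγ : c₀ * (γ ⬝ᵥ γ) ≤ Qγ :=
    le_trans (mul_le_mul_of_nonneg_right hc₀Λ hγγnn) (hquadA γ)
  have hQγnn : 0 ≤ Qγ := le_trans (mul_nonneg hc₀.le hγγnn) hqAγ
  have hγγsum : γ ⬝ᵥ γ = ∑ i : {l : Fin q // l ∈ S}, gS i * gS i := by
    have h8 := extS_dotProduct S gS γ
    rw [← hγe] at h8
    exact h8
  have hgL2 : (∑ i : {l : Fin q // l ∈ S}, |gS i|)^2 ≤ (S.card : ℝ) * (γ ⬝ᵥ γ) := by
    have h5 := Finset.sum_mul_sq_le_sq_mul_sq Finset.univ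
      (fun i : {l : Fin q // l ∈ S} => |gS i|) (fun _ => (1:ℝ))
    have h6 : ∑ i : {l : Fin q // l ∈ S}, |gS i| * (1:ℝ) = ∑ i, |gS i| := by simp
    have h7 : ∑ _i : {l : Fin q // l ∈ S}, ((1:ℝ))^2 = (S.card : ℝ) := by
      simp [Finset.card_univ]
    rw [h6, h7] at h5
    calc (∑ i : {l : Fin q // l ∈ S}, |gS i|)^2
        ≤ (∑ i : {l : Fin q // l ∈ S}, |gS i|^2) * (S.card : ℝ) := h5
      _ = (S.card : ℝ) * (γ ⬝ᵥ γ) := by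
          rw [hγγsum, mul_comm]
          congr 1
          exact Finset.sum_congr rfl fun i _ => by rw [sq_abs, ← pow_two, pow_two]
  have hgLnn : 0 ≤ ∑ i : {l : Fin q // l ∈ S}, |gS i| :=
    Finset.sum_nonneg fun i _ => abs_nonneg _
  set t := Real.sqrt Qγ with ht
  set G := Real.sqrt (γ ⬝ᵥ γ) with hG
  set r := Real.sqrt c₀ with hr
  set u := lam * Real.sqrt (S.card : ℝ) with hu
  have hunn : 0 ≤ u := mul_nonneg hlam.le (Real.sqrt_nonneg _)
  have hrpos : 0 < r := Real.sqrt_pos.mpr hc₀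
  have hrr : r * r = c₀ := Real.mul_self_sqrt hc₀.le
  have htt : t * t = Qγ := Real.mul_self_sqrt hQγnn
  have hGG : G * G = γ ⬝ᵥ γ := Real.mul_self_sqrt hγγnn
  have htnn : 0 ≤ t := Real.sqrt_nonneg _
  have hGnn : 0 ≤ G := Real.sqrt_nonneg _
  have ha : γ ⬝ᵥ (A *ᵥ γ0) ≤ t := by
    calc γ ⬝ᵥ (A *ᵥ γ0) ≤ |γ ⬝ᵥ (A *ᵥ γ0)| := le_abs_self _
      _ = Real.sqrt ((γ ⬝ᵥ (A *ᵥ γ0))^2) := (Real.sqrt_sq_eq_abs _).symm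
      _ ≤ Real.sqrt Qγ := Real.sqrt_le_sqrt
          (by linarith [hcs0, mul_le_mul_of_nonneg_left hQ0le hQγnn])
  have hrG : r * G ≤ t := by
    have h8 : r * G = Real.sqrt (c₀ * (γ ⬝ᵥ γ)) := (Real.sqrt_mul hc₀.le _).symm
    rw [h8]
    exact Real.sqrt_le_sqrt hqAγ
  have hLG : ∑ i : {l : Fin q // l ∈ S}, |gS i| ≤ Real.sqrt (S.card : ℝ) * G := by
    calc ∑ i : {l : Fin q // l ∈ S}, |gS i|
        = Real.sqrt ((∑ i : {l : Fin q // l ∈ S}, |gS i|)^2) := (Real.sqrt_sq hgLnn).symm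
      _ ≤ Real.sqrt ((S.card : ℝ) * (γ ⬝ᵥ γ)) := Real.sqrt_le_sqrt hgL2
      _ = Real.sqrt (S.card : ℝ) * G := Real.sqrt_mul hsnn _
  have hkey : t * t ≤ t + u * G := by
    have h8 : lam * ∑ i : {l : Fin q // l ∈ S}, |gS i| ≤ u * G := by
      calc lam * ∑ i : {l : Fin q // l ∈ S}, |gS i|
          ≤ lam * (Real.sqrt (S.card : ℝ) * G) :=
            mul_le_mul_of_nonneg_left hLG hlam.le
        _ = u * G := by rw [hu]; ring
    rw [htt]
    calc Qγ = γ ⬝ᵥ (A *ᵥ γ0) + γ ⬝ᵥ (A *ᵥ (fun l => γ l - γ0 l)) := hsplit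
      _ ≤ t + u * G := add_le_add ha (hγh.trans h8)
  have hrt : r * t ≤ r + u := by
    rcases htnn.eq_or_lt with h | h
    · rw [← h, mul_zero]; exact add_nonneg hrpos.le hunn
    · have e3 : r * (t * t) ≤ r * (t + u * G) := mul_le_mul_of_nonneg_left hkey hrpos.le
      have e4 : u * (r * G) ≤ u * t := mul_le_mul_of_nonneg_left hrG hunn
      have h8 : (r * t) * t ≤ (r + u) * t := by linarith [e3, e4]
      exact le_of_mul_le_mul_right h8 h
  have hC1 : lam * ∑ j, |γ j| ≤ u / r + u * u / c₀ := by
    rw [habs]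
    have h8 : lam * ∑ i : {l : Fin q // l ∈ S}, |gS i| ≤ u * G := by
      calc lam * ∑ i : {l : Fin q // l ∈ S}, |gS i|
          ≤ lam * (Real.sqrt (S.card : ℝ) * G) :=
            mul_le_mul_of_nonneg_left hLG hlam.le
        _ = u * G := by rw [hu]; ring
    have hfin : c₀ * (u * G) ≤ u * r + u * u := by
      have e5 : c₀ * (u * G) = (u * r) * (r * G) := by rw [← hrr]; ring
      have e6 : (u * r) * (r * G) ≤ (u * r) * t :=
        mul_le_mul_of_nonneg_left hrG (mul_nonneg hunn hrpos.le)
      have e7 : u * (r * t) ≤ u * (r + u) := mul_le_mul_of_nonneg_left hrt hunn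
      linarith [e5, e6, e7]
    have h9 : u * r / c₀ = u / r := by
      rw [← hrr]
      field_simp
    have hmain : lam * ∑ i : {l : Fin q // l ∈ S}, |gS i| ≤ (u * r + u * u) / c₀ := by
      rw [le_div_iff₀ hc₀]
      linarith [mul_le_mul_of_nonneg_right h8 hc₀.le, hfin]
    calc lam * ∑ i : {l : Fin q // l ∈ S}, |gS i| ≤ (u * r + u * u) / c₀ := hmain
      _ = u / r + u * u / c₀ := by rw [add_div, h9]
  -- Conclusion 4
  have hcolS_eq : colS Sg S ⬝ᵥ cS = γ0 ⬝ᵥ (A *ᵥ projColCoef Sg S) := by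
    have h10 : γ0 ⬝ᵥ (A *ᵥ extS S cS) = (A *ᵥ γ0) ⬝ᵥ extS S cS := by
      rw [dotProduct_mulVec, ← mulVec_transpose, hAsymmT]
    rw [hγS, h10, hγ0]
    rw [dotProduct_comm (fun j => Sg j.succ 0) (extS S cS), extS_dotProduct]
    rw [dotProduct]
    exact Finset.sum_congr rfl fun i _ => mul_comm _ _
  have hseq : (1 - γ0 ⬝ᵥ (A *ᵥ γ)) - (1 - colS Sg S ⬝ᵥ (ASS⁻¹ *ᵥ colS Sg S))
      = γ0 ⬝ᵥ (A *ᵥ δ) := by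
    have h11 : γ0 ⬝ᵥ (A *ᵥ δ) = γ0 ⬝ᵥ (A *ᵥ projColCoef Sg S) - γ0 ⬝ᵥ (A *ᵥ γ) := by
      rw [show δ = projColCoef Sg S - γ from rfl, mulVec_sub, dotProduct_sub]
    rw [h11, ← hcolS_eq, ← hcS]
    ring
  have hcs4 : (γ0 ⬝ᵥ (A *ᵥ δ))^2 ≤ (γ0 ⬝ᵥ (A *ᵥ γ0)) * Q := psd_cs hApsd γ0 δ
  have hC4 : |(1 - γ0 ⬝ᵥ (A *ᵥ γ)) - (1 - colS Sg S ⬝ᵥ (ASS⁻¹ *ᵥ colS Sg S))| ≤ u / r := by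
    rw [hseq]
    calc |γ0 ⬝ᵥ (A *ᵥ δ)| = Real.sqrt ((γ0 ⬝ᵥ (A *ᵥ δ))^2) := (Real.sqrt_sq_eq_abs _).symm
      _ ≤ Real.sqrt (u * u / c₀) := by
          refine Real.sqrt_le_sqrt ?_
          have e8 : 0 ≤ (1 - γ0 ⬝ᵥ (A *ᵥ γ0)) * Q := mul_nonneg (by linarith) hQnn
          have e9 : (1 - γ0 ⬝ᵥ (A *ᵥ γ0)) * Q = Q - (γ0 ⬝ᵥ (A *ᵥ γ0)) * Q := by ring
          linarith [hcs4, hC3, e8, e9]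
      _ = u / r := by
          rw [show u * u = u^2 by ring, hr, Real.sqrt_div (sq_nonneg u),
            Real.sqrt_sq hunn]
  exact ⟨hC1, hC2, hQnn, hC3, hC4⟩

/-- Lemma `projectS.lemma`: if `γ♯` is supported on `S` with
`‖Σ_{-1,-1}(γ♯-γ⁰)‖_∞ ≤ λ♯` and `λ♯√s → 0`, then `λ♯‖γ♯‖₁ → 0` (so `(γ♯,λ♯)` is an eligible
pair), `‖Σ_{-1,-1}^{1/2}(γ^S-γ♯)‖₂² ≤ s λ♯²/Λ_min² → 0`, and
`(1 - γ⁰ᵀΣ_{-1,-1}γ♯) - E(x₁ - x_S γ_S^S)² → 0`. -/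
theorem eligible_pairs_are_approximate_projections
    (k : ℕ → ℕ) (hk : ∀ n, 1 ≤ k n)
    (Sig : ∀ n, Matrix (Fin (k n + 1)) (Fin (k n + 1)) ℝ)
    (hsymm : ∀ n, (Sig n).IsSymm)
    (hpos : ∀ n, (Sig n).PosDef)
    (hdiag : ∀ n, ∀ i, Sig n i i = 1)
    (c₀ : ℝ) (hc₀ : 0 < c₀)
    (heig : ∀ n i, c₀ ≤ (hpos n).1.eigenvalues i)
    (γ0 : ∀ n, Fin (k n) → ℝ)
    (hγ0 : ∀ n, minorMat (Sig n) *ᵥ γ0 n = fun j => Sig n j.succ 0)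
    (S : ∀ n, Finset (Fin (k n)))
    (lam : ℕ → ℝ) (hlam : ∀ n, 0 < lam n)
    (γs : ∀ n, Fin (k n) → ℝ)
    (hsupp : ∀ n j, j ∉ S n → γs n j = 0)
    (hE1 : ∀ n j, |(minorMat (Sig n) *ᵥ (fun l => γs n l - γ0 n l)) j| ≤ lam n)
    (hconv : Tendsto (fun n => lam n * Real.sqrt ((S n).card)) atTop (nhds 0)) :
    -- λ♯ ‖γ♯‖₁ → 0, so (γ♯, λ♯) is an eligible pair
    Tendsto (fun n => lam n * ∑ j, |γs n j|) atTop (nhds 0) ∧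
    -- ‖Σ_{-1,-1}^{1/2}(γ^S - γ♯)‖₂² ≤ s λ♯² / Λ_min²  → 0
    (∀ n, (fun l => projColCoef (Sig n) (S n) l - γs n l) ⬝ᵥ
        (minorMat (Sig n) *ᵥ (fun l => projColCoef (Sig n) (S n) l - γs n l))
          ≤ ((S n).card : ℝ) * lam n ^ 2 / (⨅ i, (hpos n).1.eigenvalues i)) ∧
    Tendsto (fun n => (fun l => projColCoef (Sig n) (S n) l - γs n l) ⬝ᵥ
        (minorMat (Sig n) *ᵥ (fun l => projColCoef (Sig n) (S n) l - γs n l)))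
      atTop (nhds 0) ∧
    -- (1 - γ⁰ᵀΣ_{-1,-1}γ♯) - E(x₁ - x_S γ_S^S)² → 0, where
    -- E(x₁ - x_S γ_S^S)² = 1 - (Σ_{1,j})_{j∈S} Σ_{S,S}^{-1} (Σ_{j,1})_{j∈S}
    Tendsto (fun n =>
        (1 - γ0 n ⬝ᵥ (minorMat (Sig n) *ᵥ γs n)) -
          (1 - colS (Sig n) (S n) ⬝ᵥ
            ((((minorMat (Sig n)).submatrix
                  (Subtype.val : {l : Fin (k n) // l ∈ S n} → Fin (k n))
                  (Subtype.val : {l : Fin (k n) // l ∈ S n} → Fin (k n)))⁻¹) *ᵥ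
              colS (Sig n) (S n)))) atTop (nhds 0) := by
  have key := fun n => core (Sig n) (hsymm n) (hpos n) (hdiag n) c₀ hc₀ (heig n)
    (γ0 n) (hγ0 n) (S n) (lam n) (hlam n) (γs n) (hsupp n) (hE1 n)
  refine ⟨?_, fun n => (key n).2.1, ?_, ?_⟩
  · have hb : Filter.Tendsto (fun n => lam n * Real.sqrt ((S n).card) / Real.sqrt c₀
        + (lam n * Real.sqrt ((S n).card)) * (lam n * Real.sqrt ((S n).card)) / c₀)
        Filter.atTop (nhds 0) := by
      have h1 := hconv.div_const (Real.sqrt c₀)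
      have h2 := (hconv.mul hconv).div_const c₀
      simpa using h1.add h2
    exact squeeze_zero
      (fun n => mul_nonneg (hlam n).le (Finset.sum_nonneg fun j _ => abs_nonneg _))
      (fun n => (key n).1) hb
  · have hb : Filter.Tendsto (fun n =>
        (lam n * Real.sqrt ((S n).card)) * (lam n * Real.sqrt ((S n).card)) / c₀)
        Filter.atTop (nhds 0) := by
      simpa using (hconv.mul hconv).div_const c₀
    exact squeeze_zero (fun n => (key n).2.2.1) (fun n => (key n).2.2.2.1) hb
  · have hb := hconv.div_const (Real.sqrt c₀)
    rw [zero_div] at hb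
    exact squeeze_zero_norm
      (fun n => by simpa [Real.norm_eq_abs] using (key n).2.2.2.2) hb
end
end

section
/- Fix S ⊆ {2,…,p} of cardinality s = s(n) and λ♯ = λ♯(n) > 0. Suppose there is a vector z ∈ ℝ^{p−1} with ‖z‖_∞ ≤ 1 such that 1 − λ♯²‖Σ_{-1,-1}^{-1/2}z‖₂² ≫ 0 and λ♯²‖Σ_{-1,-1}^{-1/2}z‖₂² ≫ 0. Let γ♯ ∈ ℝ^{p−1} satisfy γ♯_{-S} = 0 and 1 − λ♯²‖Σ_{-1,-1}^{-1/2}z‖₂² − ‖Σ_{-1,-1}^{1/2}γ♯_S‖₂² ≫ 0, and define γ⁰ := γ♯ + λ♯ Σ_{-1,-1}^{-1} z. If λ♯√s → 0 as n → ∞, then: (γ♯, λ♯) is an eligible pair relative to γ⁰; γ⁰ is allowed for all sufficiently large n; λ♯‖γ⁰‖₁ does not tend to 0; and in fact ‖Σ_{-1,-1}^{1/2}(γ⁰ − γ♯)‖₂² = λ♯² zᵀΣ_{-1,-1}^{-1}z ≫ 0. -/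
open Filter Matrix

noncomputable section

open scoped MatrixOrder in
/-- Cauchy–Schwarz for positive semidefinite quadratic forms over ℝ. -/
lemma psd_cauchy_schwarz {m : Type*} [Fintype m] {A : Matrix m m ℝ} (hA : A.PosSemidef)
    (x y : m → ℝ) :
    (x ⬝ᵥ (A *ᵥ y)) ^ 2 ≤ (x ⬝ᵥ (A *ᵥ x)) * (y ⬝ᵥ (A *ᵥ y)) := by
  classical
  obtain ⟨S, hSh, hSS⟩ : ∃ S : Matrix m m ℝ, S.IsHermitian ∧ S * S = A :=
    by
      obtain ⟨X, hX, -, hXX⟩ :=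
        sub_zero A ▸ CFC.exists_sqrt_of_isSelfAdjoint_of_quasispectrumRestricts hA.isHermitian
          (QuasispectrumRestricts.nnreal_of_nonneg hA.nonneg)
      exact ⟨X, hX, by rw [sub_zero] at hXX; exact hXX⟩
  have hT : Sᵀ = S := by simpa [Matrix.IsHermitian, conjTranspose_eq_transpose_of_trivial] using hSh
  have key : ∀ a b : m → ℝ, a ⬝ᵥ (A *ᵥ b) = (S *ᵥ a) ⬝ᵥ (S *ᵥ b) := by
    intro a b
    rw [← hSS, ← mulVec_mulVec, dotProduct_mulVec a S, ← hT, vecMul_transpose, hT]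
  rw [key, key, key]
  calc ((S *ᵥ x) ⬝ᵥ (S *ᵥ y)) ^ 2
      ≤ (∑ i, (S *ᵥ x) i ^ 2) * (∑ i, (S *ᵥ y) i ^ 2) := by
        simpa [dotProduct, sq] using Finset.sum_mul_sq_le_sq_mul_sq Finset.univ (S *ᵥ x) (S *ᵥ y)
    _ = ((S *ᵥ x) ⬝ᵥ (S *ᵥ x)) * ((S *ᵥ y) ⬝ᵥ (S *ᵥ y)) := by simp [dotProduct, sq]

/-- Lower bound on the quadratic form of a hermitian real matrix in terms of
a lower bound on the eigenvalues. -/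
lemma quad_lower_s9 {m : Type*} [Fintype m] [DecidableEq m] {A : Matrix m m ℝ} (hA : A.IsHermitian)
    {c : ℝ} (hc : ∀ i, c ≤ hA.eigenvalues i) (v : m → ℝ) :
    c * ∑ i, v i ^ 2 ≤ v ⬝ᵥ (A *ᵥ v) := by
  have hPSD : (A - c • (1 : Matrix m m ℝ)).PosSemidef := by
    have hspec := hA.spectral_theorem
    simp only [Unitary.conjStarAlgAut_apply, Unitary.coe_star] at hspec
    set U := (hA.eigenvectorUnitary : Matrix m m ℝ) with hUdef
    have hU : U * star U = 1 := (Matrix.mem_unitaryGroup_iff).mp hA.eigenvectorUnitary.2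
    have hdiff : A - c • (1 : Matrix m m ℝ)
        = U * (diagonal (fun i => hA.eigenvalues i - c)) * star U := by
      have h1 : (c • (1 : Matrix m m ℝ)) = U * (c • (1 : Matrix m m ℝ)) * star U := by
        rw [Matrix.mul_smul, Matrix.smul_mul, mul_one, hU]
      have h2 : diagonal (RCLike.ofReal ∘ hA.eigenvalues) - c • (1 : Matrix m m ℝ)
          = diagonal (fun i => hA.eigenvalues i - c) := by
        ext i j
        rcases eq_or_ne i j with rfl | hij
        · simp
        · simp [Matrix.diagonal_apply_ne _ hij, Matrix.one_apply_ne hij]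
      calc A - c • (1 : Matrix m m ℝ)
          = U * diagonal (RCLike.ofReal ∘ hA.eigenvalues) * star U
            - U * (c • (1 : Matrix m m ℝ)) * star U := by rw [← hspec, ← h1]
        _ = U * (diagonal (RCLike.ofReal ∘ hA.eigenvalues) - c • (1 : Matrix m m ℝ)) * star U := by
            rw [Matrix.mul_sub, Matrix.sub_mul]
        _ = U * (diagonal (fun i => hA.eigenvalues i - c)) * star U := by rw [h2]
    rw [hdiff]
    exact Matrix.PosSemidef.mul_mul_conjTranspose_same
      (Matrix.posSemidef_diagonal_iff.mpr fun i => by linarith [hc i]) U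
  have h0 := hPSD.dotProduct_mulVec_nonneg v
  simp only [star_trivial] at h0
  have h2 : v ⬝ᵥ ((A - c • (1 : Matrix m m ℝ)) *ᵥ v) = v ⬝ᵥ (A *ᵥ v) - c * ∑ i, v i ^ 2 := by
    simp only [Matrix.sub_mulVec, dotProduct_sub, Matrix.smul_mulVec,
      Matrix.one_mulVec, dotProduct_smul, dotProduct, sq, Finset.mul_sum, smul_eq_mul,
      Pi.sub_apply, Pi.smul_apply, mul_sub, Finset.sum_sub_distrib]
    congr 1
    exact Finset.sum_congr rfl fun i _ => by ring
  rw [h2] at h0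
  linarith

/-- The bordered matrix `Σ(γ⁰) = [[1, (Σ_{-1,-1}γ⁰)ᵀ], [Σ_{-1,-1}γ⁰, Σ_{-1,-1}]]`. -/
noncomputable def bordered {q : ℕ} (A : Matrix (Fin q) (Fin q) ℝ) (γ : Fin q → ℝ) :
    Matrix (Fin (q + 1)) (Fin (q + 1)) ℝ :=
  Matrix.of
    (Fin.cons (Fin.cons 1 (A *ᵥ γ) : Fin (q + 1) → ℝ)
      (fun i : Fin q => (Fin.cons ((A *ᵥ γ) i) (A i) : Fin (q + 1) → ℝ)))

/-- Expansion of the quadratic form of the bordered matrix. -/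
lemma bordered_quad {q : ℕ} (A : Matrix (Fin q) (Fin q) ℝ) (γ : Fin q → ℝ)
    (u : Fin (q + 1) → ℝ) :
    u ⬝ᵥ (bordered A γ *ᵥ u)
      = u 0 ^ 2 + 2 * u 0 * ((A *ᵥ γ) ⬝ᵥ (fun i => u i.succ))
        + (fun i => u i.succ) ⬝ᵥ (A *ᵥ (fun i => u i.succ)) := by
  simp only [bordered, dotProduct, Matrix.mulVec, Matrix.of_apply, Fin.sum_univ_succ,
    Fin.cons_zero, Fin.cons_succ, one_mul, mul_add, Finset.sum_add_distrib, Finset.mul_sum]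
  ring_nf
  rw [Finset.sum_comm]
  have h : ∀ T : Fin q → ℝ, (∑ x, u 0 * u x.succ * T x) + (∑ x, (u 0 * T x) * u x.succ)
      = ∑ x, (u 0 * 2 * T x) * u x.succ := fun T => by
    rw [← Finset.sum_add_distrib]
    exact Finset.sum_congr rfl fun i _ => by ring
  have h' : ∀ T : Fin q → ℝ, ∑ x, (u 0 * T x) * u x.succ * 2 = ∑ x, (u 0 * 2 * T x) * u x.succ :=
    fun T => Finset.sum_congr rfl fun i _ => by ring
  linarith [h (fun x => ∑ x_1, A x x_1 * γ x_1), h' (fun x => ∑ x_1, A x x_1 * γ x_1)]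

/-- Lemma `direct.lemma`: direct construction of a `γ⁰` admitting an eligible
pair `(γ♯, λ♯)` with non-vanishing improvement, from a vector `z` with `‖z‖_∞ ≤ 1`. -/
theorem direct_construction
    (k : ℕ → ℕ) (hk : ∀ n, 1 ≤ k n)
    (A : ∀ n, Matrix (Fin (k n)) (Fin (k n)) ℝ)
    (hsymm : ∀ n, (A n).IsSymm)
    (hpos : ∀ n, (A n).PosDef)
    (hdiag : ∀ n, ∀ i, A n i i = 1)
    (c₀ : ℝ) (hc₀ : 0 < c₀)
    (heig : ∀ n i, c₀ ≤ (hpos n).1.eigenvalues i)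
    (S : ∀ n, Finset (Fin (k n)))
    (lam : ℕ → ℝ) (hlam : ∀ n, 0 < lam n)
    -- the vector z with ‖z‖_∞ ≤ 1
    (z : ∀ n, Fin (k n) → ℝ) (hz : ∀ n j, |z n j| ≤ 1)
    -- 1 - λ♯²‖Σ_{-1,-1}^{-1/2} z‖₂² ≫ 0 and λ♯²‖Σ_{-1,-1}^{-1/2} z‖₂² ≫ 0
    (hz1 : ∃ c > (0 : ℝ), ∀ᶠ n in atTop,
        c ≤ 1 - lam n ^ 2 * (z n ⬝ᵥ ((A n)⁻¹ *ᵥ z n)))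
    (hz2 : ∃ c > (0 : ℝ), ∀ᶠ n in atTop,
        c ≤ lam n ^ 2 * (z n ⬝ᵥ ((A n)⁻¹ *ᵥ z n)))
    -- γ♯ supported on S with 1 - λ♯²‖Σ^{-1/2}z‖₂² - ‖Σ^{1/2}γ♯_S‖₂² ≫ 0
    (γs : ∀ n, Fin (k n) → ℝ)
    (hγsupp : ∀ n j, j ∉ S n → γs n j = 0)
    (hγs : ∃ c > (0 : ℝ), ∀ᶠ n in atTop,
        c ≤ 1 - lam n ^ 2 * (z n ⬝ᵥ ((A n)⁻¹ *ᵥ z n)) - γs n ⬝ᵥ (A n *ᵥ γs n))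
    -- γ⁰ := γ♯ + λ♯ Σ_{-1,-1}^{-1} z
    (γ0 : ∀ n, Fin (k n) → ℝ)
    (hγ0 : ∀ n, γ0 n = fun j => γs n j + lam n * ((A n)⁻¹ *ᵥ z n) j)
    -- λ♯ √s → 0
    (hconv : Tendsto (fun n => lam n * Real.sqrt ((S n).card)) atTop (nhds 0)) :
    -- (γ♯, λ♯) is an eligible pair relative to γ⁰
    (∀ n j, |(A n *ᵥ (fun l => γs n l - γ0 n l)) j| ≤ lam n) ∧
    Tendsto (fun n => lam n * ∑ j, |γs n j|) atTop (nhds 0) ∧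
    -- γ⁰ is allowed for all sufficiently large n
    ((∃ c > (0 : ℝ), ∀ᶠ n in atTop, ∀ u : Fin (k n + 1) → ℝ,
        c * ∑ i, u i ^ 2 ≤ u ⬝ᵥ (bordered (A n) (γ0 n) *ᵥ u)) ∧
      (∀ᶠ n in atTop, ∀ j, |(A n *ᵥ γ0 n) j| ≤ 1)) ∧
    -- λ♯ ‖γ⁰‖₁ does not tend to 0
    ¬ Tendsto (fun n => lam n * ∑ j, |γ0 n j|) atTop (nhds 0) ∧
    -- ‖Σ_{-1,-1}^{1/2}(γ⁰ - γ♯)‖₂² = λ♯² zᵀ Σ_{-1,-1}^{-1} z ≫ 0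
    (∀ n, (fun l => γ0 n l - γs n l) ⬝ᵥ (A n *ᵥ (fun l => γ0 n l - γs n l))
        = lam n ^ 2 * (z n ⬝ᵥ ((A n)⁻¹ *ᵥ z n))) ∧
    (∃ c > (0 : ℝ), ∀ᶠ n in atTop,
        c ≤ (fun l => γ0 n l - γs n l) ⬝ᵥ (A n *ᵥ (fun l => γ0 n l - γs n l))) := by
  classical
  -- basic algebraic facts
  have hAinv : ∀ n, A n * (A n)⁻¹ = 1 := fun n =>
    Matrix.mul_nonsing_inv _ (isUnit_iff_ne_zero.mpr (hpos n).det_pos.ne')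
  have hAw : ∀ n, A n *ᵥ ((A n)⁻¹ *ᵥ z n) = z n := fun n => by
    rw [Matrix.mulVec_mulVec, hAinv n, Matrix.one_mulVec]
  have hγ0eq : ∀ n, γ0 n = γs n + lam n • ((A n)⁻¹ *ᵥ z n) := fun n => by
    funext l
    rw [hγ0 n]
    simp
  have hswap : ∀ n (x y : Fin (k n) → ℝ), x ⬝ᵥ (A n *ᵥ y) = y ⬝ᵥ (A n *ᵥ x) := by
    intro n x y
    rw [Matrix.dotProduct_mulVec, ← (hsymm n), Matrix.vecMul_transpose, (hsymm n)]
    exact dotProduct_comm _ _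
  have hQ0 : ∀ n (v : Fin (k n) → ℝ), 0 ≤ v ⬝ᵥ (A n *ᵥ v) := fun n v => by
    simpa using (hpos n).posSemidef.dotProduct_mulVec_nonneg v
  have hQc₀ : ∀ n (v : Fin (k n) → ℝ), c₀ * ∑ i, v i ^ 2 ≤ v ⬝ᵥ (A n *ᵥ v) :=
    fun n v => quad_lower_s9 (hpos n).1 (heig n) v
  have hzw0 : ∀ n, 0 ≤ z n ⬝ᵥ ((A n)⁻¹ *ᵥ z n) := fun n => by
    simpa using ((hpos n).inv).posSemidef.dotProduct_mulVec_nonneg (z n)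
  have habs_dot : ∀ n (x : Fin (k n) → ℝ), |z n ⬝ᵥ x| ≤ ∑ j, |x j| := by
    intro n x
    calc |∑ j, z n j * x j| ≤ ∑ j, |z n j * x j| := Finset.abs_sum_le_sum_abs _ _
      _ ≤ ∑ j, |x j| := Finset.sum_le_sum fun j _ => by
          rw [abs_mul]
          exact mul_le_of_le_one_left (abs_nonneg (x j)) (hz n j)
  -- Part 1
  have hdiffneg : ∀ n, (fun l => γs n l - γ0 n l) = (-(lam n)) • ((A n)⁻¹ *ᵥ z n) := fun n => by
    funext l
    rw [hγ0 n]
    simp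
  have part1 : ∀ n j, |(A n *ᵥ (fun l => γs n l - γ0 n l)) j| ≤ lam n := by
    intro n j
    rw [hdiffneg n, Matrix.mulVec_smul, hAw n]
    simp only [Pi.smul_apply, smul_eq_mul]
    rw [abs_mul, abs_neg, abs_of_pos (hlam n)]
    exact mul_le_of_le_one_right (hlam n).le (hz n j)
  -- Part 5
  have hdiffpos : ∀ n, (fun l => γ0 n l - γs n l) = lam n • ((A n)⁻¹ *ᵥ z n) := fun n => by
    funext l
    rw [hγ0 n]
    simp
  have part5 : ∀ n, (fun l => γ0 n l - γs n l) ⬝ᵥ (A n *ᵥ (fun l => γ0 n l - γs n l))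
      = lam n ^ 2 * (z n ⬝ᵥ ((A n)⁻¹ *ᵥ z n)) := by
    intro n
    rw [hdiffpos n, Matrix.mulVec_smul, hAw n, smul_dotProduct, dotProduct_smul,
      smul_eq_mul, smul_eq_mul, dotProduct_comm]
    ring
  -- Part 2
  obtain ⟨c1, hc1pos, hc1⟩ := hγs
  have hγsQ1 : ∀ᶠ n in atTop, γs n ⬝ᵥ (A n *ᵥ γs n) ≤ 1 := by
    filter_upwards [hc1] with n hn
    have h1 : 0 ≤ lam n ^ 2 * (z n ⬝ᵥ ((A n)⁻¹ *ᵥ z n)) :=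
      mul_nonneg (sq_nonneg _) (hzw0 n)
    linarith
  have part2 : Tendsto (fun n => lam n * ∑ j, |γs n j|) atTop (nhds 0) := by
    apply squeeze_zero' (g := fun n => (lam n * Real.sqrt ((S n).card)) * (1 / Real.sqrt c₀))
    · filter_upwards with n
      exact mul_nonneg (hlam n).le (Finset.sum_nonneg fun j _ => abs_nonneg _)
    · filter_upwards [hγsQ1] with n hn
      have hb : ∑ j, |γs n j| ≤ Real.sqrt ((S n).card) * (1 / Real.sqrt c₀) := by
        have hsumS : ∑ j, |γs n j| = ∑ j ∈ S n, |γs n j| := by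
          symm
          apply Finset.sum_subset (Finset.subset_univ _)
          intro j _ hj
          simp [hγsupp n j hj]
        have hCS : (∑ j ∈ S n, |γs n j|) ^ 2
            ≤ (∑ _j ∈ S n, (1:ℝ) ^ 2) * (∑ j ∈ S n, |γs n j| ^ 2) := by
          simpa [sq] using Finset.sum_mul_sq_le_sq_mul_sq (S n) (fun _ => (1:ℝ))
            (fun j => |γs n j|)
        have h3 : ∑ j ∈ S n, |γs n j| ^ 2 ≤ ∑ j, γs n j ^ 2 := by
          calc ∑ j ∈ S n, |γs n j| ^ 2 = ∑ j ∈ S n, γs n j ^ 2 :=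
                Finset.sum_congr rfl fun j _ => sq_abs _
            _ ≤ ∑ j, γs n j ^ 2 := Finset.sum_le_sum_of_subset_of_nonneg
                (Finset.subset_univ _) (fun j _ _ => sq_nonneg _)
        have h2 : ∑ j ∈ S n, |γs n j| ^ 2 ≤ 1 / c₀ := by
          have h4 := hQc₀ n (γs n)
          rw [le_div_iff₀ hc₀]
          nlinarith
        rw [hsumS]
        have hcard : ∑ _j ∈ S n, (1:ℝ) ^ 2 = ((S n).card : ℝ) := by simp
        have h5 : (∑ j ∈ S n, |γs n j|) ^ 2 ≤ ((S n).card : ℝ) * (1 / c₀) := by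
          rw [hcard] at hCS
          have hcard0 : (0:ℝ) ≤ ((S n).card : ℝ) := Nat.cast_nonneg _
          nlinarith
        have h6 : (0:ℝ) ≤ ∑ j ∈ S n, |γs n j| := Finset.sum_nonneg fun j _ => abs_nonneg _
        calc ∑ j ∈ S n, |γs n j| = Real.sqrt ((∑ j ∈ S n, |γs n j|) ^ 2) := by
              rw [Real.sqrt_sq h6]
          _ ≤ Real.sqrt (((S n).card : ℝ) * (1 / c₀)) := Real.sqrt_le_sqrt h5
          _ = Real.sqrt ((S n).card) * (1 / Real.sqrt c₀) := by
              rw [Real.sqrt_mul (Nat.cast_nonneg _), one_div, one_div, Real.sqrt_inv]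
      calc lam n * ∑ j, |γs n j|
          ≤ lam n * (Real.sqrt ((S n).card) * (1 / Real.sqrt c₀)) :=
            mul_le_mul_of_nonneg_left hb (hlam n).le
        _ = (lam n * Real.sqrt ((S n).card)) * (1 / Real.sqrt c₀) := by ring
    · simpa using hconv.mul_const (1 / Real.sqrt c₀)
  -- quadratic form of γ0
  have hQγ0 : ∀ n, γ0 n ⬝ᵥ (A n *ᵥ γ0 n)
      = γs n ⬝ᵥ (A n *ᵥ γs n) + 2 * lam n * (γs n ⬝ᵥ z n)
        + lam n ^ 2 * (z n ⬝ᵥ ((A n)⁻¹ *ᵥ z n)) := by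
    intro n
    have e1 : γ0 n ⬝ᵥ (A n *ᵥ γ0 n)
        = (γs n + lam n • ((A n)⁻¹ *ᵥ z n)) ⬝ᵥ (A n *ᵥ γs n + lam n • z n) := by
      rw [hγ0eq n, Matrix.mulVec_add, Matrix.mulVec_smul, hAw n]
    rw [e1, add_dotProduct, dotProduct_add, dotProduct_add,
      smul_dotProduct, smul_dotProduct, dotProduct_smul,
      dotProduct_smul, smul_eq_mul, smul_eq_mul, smul_eq_mul, smul_eq_mul]
    have e2 : ((A n)⁻¹ *ᵥ z n) ⬝ᵥ (A n *ᵥ γs n) = γs n ⬝ᵥ z n := by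
      rw [hswap n, hAw n]
    have e3 : ((A n)⁻¹ *ᵥ z n) ⬝ᵥ z n = z n ⬝ᵥ ((A n)⁻¹ *ᵥ z n) :=
      dotProduct_comm _ _
    rw [e2, e3]
    ring
  -- eventual bound on the quadratic form of γ0
  have hρ : ∀ᶠ n in atTop, γ0 n ⬝ᵥ (A n *ᵥ γ0 n) ≤ 1 - c1 / 2 := by
    filter_upwards [hc1,
      Filter.Tendsto.eventually_lt_const (show (0:ℝ) < c1 / 4 by linarith) part2]
      with n h1 h2
    have h3 : |γs n ⬝ᵥ z n| ≤ ∑ j, |γs n j| := by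
      rw [dotProduct_comm]
      exact habs_dot n (γs n)
    have h4 : lam n * (γs n ⬝ᵥ z n) ≤ lam n * |γs n ⬝ᵥ z n| :=
      mul_le_mul_of_nonneg_left (le_abs_self _) (hlam n).le
    have h5 : lam n * |γs n ⬝ᵥ z n| ≤ lam n * ∑ j, |γs n j| :=
      mul_le_mul_of_nonneg_left h3 (hlam n).le
    rw [hQγ0 n]
    linarith
  -- Part 3a : positive definiteness of the bordered matrix
  have hrlt : Real.sqrt (1 - c1 / 2) < 1 := by
    rw [Real.sqrt_lt' one_pos]
    nlinarith
  have hr0 : 0 ≤ Real.sqrt (1 - c1 / 2) := Real.sqrt_nonneg _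
  have hc3pos : 0 < (1 - Real.sqrt (1 - c1 / 2)) * min 1 c₀ :=
    mul_pos (by linarith) (lt_min one_pos hc₀)
  have part3a : ∀ᶠ n in atTop, ∀ u : Fin (k n + 1) → ℝ,
      (1 - Real.sqrt (1 - c1 / 2)) * min 1 c₀ * ∑ i, u i ^ 2
        ≤ u ⬝ᵥ (bordered (A n) (γ0 n) *ᵥ u) := by
    filter_upwards [hρ] with n hn
    intro u
    have hρ0 : (0:ℝ) ≤ 1 - c1 / 2 := le_trans (hQ0 n (γ0 n)) hn
    set r := Real.sqrt (1 - c1 / 2) with hrdef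
    have hr2 : r ^ 2 = 1 - c1 / 2 := Real.sq_sqrt hρ0
    set v : Fin (k n) → ℝ := fun i => u i.succ with hv
    have hquad := bordered_quad (A n) (γ0 n) u
    have ht : (A n *ᵥ γ0 n) ⬝ᵥ v = γ0 n ⬝ᵥ (A n *ᵥ v) := by
      rw [dotProduct_comm, hswap n]
    rw [ht] at hquad
    have hQv : 0 ≤ v ⬝ᵥ (A n *ᵥ v) := hQ0 n v
    have hCS : (γ0 n ⬝ᵥ (A n *ᵥ v)) ^ 2 ≤ (1 - c1 / 2) * (v ⬝ᵥ (A n *ᵥ v)) :=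
      le_trans (psd_cauchy_schwarz (hpos n).posSemidef _ _)
        (mul_le_mul_of_nonneg_right hn hQv)
    have hst : |γ0 n ⬝ᵥ (A n *ᵥ v)| ≤ r * Real.sqrt (v ⬝ᵥ (A n *ᵥ v)) := by
      rw [← Real.sqrt_sq_eq_abs, hrdef, ← Real.sqrt_mul hρ0]
      exact Real.sqrt_le_sqrt hCS
    have hsq : Real.sqrt (v ⬝ᵥ (A n *ᵥ v)) ^ 2 = v ⬝ᵥ (A n *ᵥ v) := Real.sq_sqrt hQv
    have h1 : -(2 * |u 0| * (r * Real.sqrt (v ⬝ᵥ (A n *ᵥ v))))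
        ≤ 2 * u 0 * (γ0 n ⬝ᵥ (A n *ᵥ v)) := by
      have e : |2 * u 0 * (γ0 n ⬝ᵥ (A n *ᵥ v))| = 2 * |u 0| * |γ0 n ⬝ᵥ (A n *ᵥ v)| := by
        rw [abs_mul, abs_mul]
        simp
      have e2 := neg_abs_le (2 * u 0 * (γ0 n ⬝ᵥ (A n *ᵥ v)))
      rw [e] at e2
      have e3 : 2 * |u 0| * |γ0 n ⬝ᵥ (A n *ᵥ v)|
          ≤ 2 * |u 0| * (r * Real.sqrt (v ⬝ᵥ (A n *ᵥ v))) :=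
        mul_le_mul_of_nonneg_left hst (by positivity)
      linarith
    have hkey : (1 - r) * (u 0 ^ 2 + v ⬝ᵥ (A n *ᵥ v))
        ≤ u 0 ^ 2 + 2 * u 0 * (γ0 n ⬝ᵥ (A n *ᵥ v)) + v ⬝ᵥ (A n *ᵥ v) := by
      nlinarith [sq_nonneg (|u 0| - Real.sqrt (v ⬝ᵥ (A n *ᵥ v))),
        mul_nonneg hr0 (sq_nonneg (|u 0| - Real.sqrt (v ⬝ᵥ (A n *ᵥ v)))),
        sq_abs (u 0), abs_nonneg (u 0), Real.sqrt_nonneg (v ⬝ᵥ (A n *ᵥ v))]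
    have hsum : ∑ i, u i ^ 2 = u 0 ^ 2 + ∑ i, v i ^ 2 := Fin.sum_univ_succ _
    have hm : min 1 c₀ * (u 0 ^ 2 + ∑ i, v i ^ 2) ≤ u 0 ^ 2 + v ⬝ᵥ (A n *ᵥ v) := by
      have h7 := hQc₀ n v
      have h8 : min 1 c₀ ≤ 1 := min_le_left _ _
      have h9 : min 1 c₀ ≤ c₀ := min_le_right _ _
      have hu0 : (0:ℝ) ≤ u 0 ^ 2 := sq_nonneg _
      have hv2 : (0:ℝ) ≤ ∑ i, v i ^ 2 := Finset.sum_nonneg fun _ _ => sq_nonneg _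
      nlinarith
    have hfin : (1 - r) * min 1 c₀ * ∑ i, u i ^ 2
        ≤ (1 - r) * (u 0 ^ 2 + v ⬝ᵥ (A n *ᵥ v)) := by
      rw [hsum]
      calc (1 - r) * min 1 c₀ * (u 0 ^ 2 + ∑ i, v i ^ 2)
          = (1 - r) * (min 1 c₀ * (u 0 ^ 2 + ∑ i, v i ^ 2)) := by ring
        _ ≤ (1 - r) * (u 0 ^ 2 + v ⬝ᵥ (A n *ᵥ v)) :=
            mul_le_mul_of_nonneg_left hm (by linarith)
    rw [hquad]
    linarith
  -- Part 3b : sup-norm bound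
  have part3b : ∀ᶠ n in atTop, ∀ j, |(A n *ᵥ γ0 n) j| ≤ 1 := by
    filter_upwards [hρ] with n hn
    intro j
    have h1 : (A n *ᵥ γ0 n) j = (Pi.single j (1:ℝ)) ⬝ᵥ (A n *ᵥ γ0 n) := by
      rw [single_dotProduct, one_mul]
    have h2 : (Pi.single j (1:ℝ)) ⬝ᵥ (A n *ᵥ (Pi.single j (1:ℝ))) = 1 := by
      rw [Matrix.mulVec_single, single_dotProduct]
      simp [hdiag n j]
    have h3 := psd_cauchy_schwarz (hpos n).posSemidef (Pi.single j (1:ℝ)) (γ0 n)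
    rw [h2, one_mul] at h3
    have h4 : ((A n *ᵥ γ0 n) j) ^ 2 ≤ 1 := by
      rw [h1]
      nlinarith
    nlinarith [abs_nonneg ((A n *ᵥ γ0 n) j), sq_abs ((A n *ᵥ γ0 n) j)]
  -- Part 4
  obtain ⟨c2, hc2pos, hc2⟩ := hz2
  have part4 : ¬ Tendsto (fun n => lam n * ∑ j, |γ0 n j|) atTop (nhds 0) := by
    intro hT
    have E3 := Filter.Tendsto.eventually_lt_const (show (0:ℝ) < c2 / 2 by linarith) part2
    have E4 := Filter.Tendsto.eventually_lt_const (show (0:ℝ) < c2 / 2 by linarith) hT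
    obtain ⟨n, h2, h3, h4⟩ := (hc2.and (E3.and E4)).exists
    have e1 : z n ⬝ᵥ γ0 n = z n ⬝ᵥ γs n + lam n * (z n ⬝ᵥ ((A n)⁻¹ *ᵥ z n)) := by
      rw [hγ0eq n, dotProduct_add, dotProduct_smul, smul_eq_mul]
    have e2 : lam n * (z n ⬝ᵥ γ0 n) ≤ lam n * ∑ j, |γ0 n j| :=
      mul_le_mul_of_nonneg_left (le_trans (le_abs_self _) (habs_dot n (γ0 n))) (hlam n).le
    have e3 : -(lam n * ∑ j, |γs n j|) ≤ lam n * (z n ⬝ᵥ γs n) := by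
      have h5 : -(∑ j, |γs n j|) ≤ z n ⬝ᵥ γs n := by
        have h6 := neg_abs_le (z n ⬝ᵥ γs n)
        have h7 := habs_dot n (γs n)
        linarith
      have h8 := mul_le_mul_of_nonneg_left h5 (hlam n).le
      linarith [h8]
    have e4 : lam n ^ 2 * (z n ⬝ᵥ ((A n)⁻¹ *ᵥ z n))
        = lam n * (z n ⬝ᵥ γ0 n) - lam n * (z n ⬝ᵥ γs n) := by
      rw [e1]
      ring
    linarith
  -- Part 6
  have part6 : ∃ c > (0:ℝ), ∀ᶠ n in atTop,
      c ≤ (fun l => γ0 n l - γs n l) ⬝ᵥ (A n *ᵥ (fun l => γ0 n l - γs n l)) := by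
    refine ⟨c2, hc2pos, ?_⟩
    filter_upwards [hc2] with n hn
    rw [part5 n]
    exact hn
  exact ⟨part1, part2, ⟨⟨_, hc3pos, part3a⟩, part3b⟩, part4, part5, part6⟩
end
end

section
/- Let Σ_{-1,-1} be a (p−1)×(p−1) real symmetric positive-definite matrix, S ⊆ {2,…,p}, λ♯ > 0, and let γ⁰, γ♯ ∈ ℝ^{p−1} with γ♯ = γ⁰_S (i.e. γ♯ agrees with γ⁰ on S and is zero outside S). If ‖Σ_{-1,-1}(γ♯ − γ⁰)‖_∞ ≤ λ♯, then the vector z_{-S} := Σ_{-S,-S}γ⁰_{-S}/λ♯ (the (−S)-block of Σ_{-1,-1}(γ⁰ − γ♯)/λ♯) satisfies ‖z_{-S}‖_∞ ≤ 1 and the reversed irrepresentable condition ‖Σ_{S,-S}Σ_{-S,-S}^{-1}z_{-S}‖_∞ ≤ 1. -/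
open Matrix

noncomputable section

private lemma sum_restrict {q : ℕ} (S : Finset (Fin q)) (f : Fin q → ℝ)
    (hf : ∀ j ∈ S, f j = 0) :
    ∑ j, f j = ∑ j : {j : Fin q // j ∉ S}, f j.val := by
  classical
  rw [← Finset.sum_subtype Sᶜ (fun x => Finset.mem_compl) f]
  exact (Finset.sum_subset (Finset.subset_univ _)
    (fun x _ hx => hf x (by simpa using hx))).symm

private lemma posdef_block {q : ℕ} {A : Matrix (Fin q) (Fin q) ℝ} (hpos : A.PosDef)
    (S : Finset (Fin q)) :
    (A.submatrix (Subtype.val : {j : Fin q // j ∉ S} → Fin q)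
        (Subtype.val : {j : Fin q // j ∉ S} → Fin q)).PosDef := by
  classical
  refine Matrix.PosDef.of_dotProduct_mulVec_pos (hpos.1.submatrix _) fun x hx => ?_
  set y : Fin q → ℝ := fun j => if h : j ∉ S then x ⟨j, h⟩ else 0 with hy
  have hy0 : y ≠ 0 := by
    intro h
    apply hx
    funext l
    have := congrFun h l.val
    simpa [hy, l.2] using this
  have hAy : ∀ j : Fin q, (A *ᵥ y) j
      = ∑ l : {j : Fin q // j ∉ S}, A j l.val * x l := by
    intro j
    simp only [mulVec, dotProduct]
    rw [sum_restrict S (fun l => A j l * y l) (fun l hl => by simp [hy, hl])]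
    refine Finset.sum_congr rfl fun l _ => ?_
    simp [hy, l.2]
  have key : dotProduct (star x)
        ((A.submatrix (Subtype.val : {j : Fin q // j ∉ S} → Fin q)
          (Subtype.val : {j : Fin q // j ∉ S} → Fin q)) *ᵥ x)
      = dotProduct (star y) (A *ᵥ y) := by
    simp only [dotProduct, star_trivial]
    rw [sum_restrict S (fun j => y j * (A *ᵥ y) j)
      (fun j hj => by simp [hy, hj])]
    refine Finset.sum_congr rfl fun l _ => ?_
    rw [hAy]
    simp [hy, l.2, mulVec, dotProduct, submatrix]
  rw [key]
  exact hpos.dotProduct_mulVec_pos hy0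

/-- Lemma `reversed-irrepresentable.lemma` (b): if `γ♯ = γ⁰_S` and
`‖Σ_{-1,-1}(γ♯ - γ⁰)‖_∞ ≤ λ♯`, then `z_{-S} := Σ_{-S,-S} γ⁰_{-S} / λ♯` satisfies
`‖z_{-S}‖_∞ ≤ 1` and the reversed irrepresentable condition
`‖Σ_{S,-S} Σ_{-S,-S}^{-1} z_{-S}‖_∞ ≤ 1`. -/
theorem reversed_irrepresentable_necessary
    (q : ℕ) (A : Matrix (Fin q) (Fin q) ℝ)
    (hsymm : A.IsSymm) (hpos : A.PosDef)
    (S : Finset (Fin q)) (lam : ℝ) (hlam : 0 < lam)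
    (γ0 : Fin q → ℝ)
    (hbound : ∀ j,
        |(A *ᵥ (fun l => (if l ∈ S then γ0 l else 0) - γ0 l)) j| ≤ lam) :
    -- ‖z_{-S}‖_∞ ≤ 1, where z_{-S} := Σ_{-S,-S} γ⁰_{-S} / λ♯
    (∀ i : {j : Fin q // j ∉ S},
        |((A.submatrix (Subtype.val : {j : Fin q // j ∉ S} → Fin q)
              (Subtype.val : {j : Fin q // j ∉ S} → Fin q)) *ᵥ
            (fun l : {j : Fin q // j ∉ S} => γ0 l.val)) i / lam| ≤ 1) ∧
    -- the reversed irrepresentable condition for (S, z_{-S})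
    (∀ i : {j : Fin q // j ∈ S},
        |((A.submatrix (Subtype.val : {j : Fin q // j ∈ S} → Fin q)
              (Subtype.val : {j : Fin q // j ∉ S} → Fin q)) *ᵥ
            (((A.submatrix (Subtype.val : {j : Fin q // j ∉ S} → Fin q)
                  (Subtype.val : {j : Fin q // j ∉ S} → Fin q))⁻¹) *ᵥ
              (fun l : {j : Fin q // j ∉ S} =>
                ((A.submatrix (Subtype.val : {j : Fin q // j ∉ S} → Fin q)
                      (Subtype.val : {j : Fin q // j ∉ S} → Fin q)) *ᵥ
                    (fun l' : {j : Fin q // j ∉ S} => γ0 l'.val)) l / lam))) i| ≤ 1) := by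
  classical
  set B := A.submatrix (Subtype.val : {j : Fin q // j ∉ S} → Fin q)
      (Subtype.val : {j : Fin q // j ∉ S} → Fin q) with hB
  set w : {j : Fin q // j ∉ S} → ℝ := fun l => γ0 l.val with hw
  have hsum : ∀ j : Fin q,
      |∑ l : {j : Fin q // j ∉ S}, A j l.val * γ0 l.val| ≤ lam := by
    intro j
    have h := hbound j
    have e1 : (A *ᵥ (fun l => (if l ∈ S then γ0 l else 0) - γ0 l)) j
        = - ∑ l : {j : Fin q // j ∉ S}, A j l.val * γ0 l.val := by
      simp only [mulVec, dotProduct]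
      rw [sum_restrict S (fun l => A j l * ((if l ∈ S then γ0 l else 0) - γ0 l))
        (fun l hl => by simp [hl])]
      rw [← Finset.sum_neg_distrib]
      refine Finset.sum_congr rfl fun l _ => ?_
      simp [l.2]
    rw [e1, abs_neg] at h
    exact h
  have hBw : ∀ i : {j : Fin q // j ∉ S},
      (B *ᵥ w) i = ∑ l : {j : Fin q // j ∉ S}, A i.val l.val * γ0 l.val := by
    intro i
    simp [hB, hw, mulVec, dotProduct, submatrix]
  constructor
  · intro i
    rw [abs_div, abs_of_pos hlam, div_le_one hlam, hBw]
    exact hsum i.val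
  · intro i
    have hdet : IsUnit B.det :=
      isUnit_iff_ne_zero.mpr (posdef_block hpos S).det_pos.ne'
    have hinner : (fun l : {j : Fin q // j ∉ S} => (B *ᵥ w) l / lam)
        = B *ᵥ (lam⁻¹ • w) := by
      funext l
      rw [mulVec_smul]
      simp [div_eq_inv_mul]
    rw [show (fun l : {j : Fin q // j ∉ S} =>
        ((A.submatrix (Subtype.val : {j : Fin q // j ∉ S} → Fin q)
            (Subtype.val : {j : Fin q // j ∉ S} → Fin q)) *ᵥ
          (fun l' : {j : Fin q // j ∉ S} => γ0 l'.val)) l / lam)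
        = B *ᵥ (lam⁻¹ • w) from hinner]
    have hcancel : B⁻¹ *ᵥ (B *ᵥ (lam⁻¹ • w)) = lam⁻¹ • w := by
      rw [mulVec_mulVec, Matrix.nonsing_inv_mul B hdet, one_mulVec]
    rw [hcancel]
    have : ((A.submatrix (Subtype.val : {j : Fin q // j ∈ S} → Fin q)
        (Subtype.val : {j : Fin q // j ∉ S} → Fin q)) *ᵥ (lam⁻¹ • w)) i
        = lam⁻¹ * ∑ l : {j : Fin q // j ∉ S}, A i.val l.val * γ0 l.val := by
      simp only [mulVec, dotProduct, submatrix_apply, Pi.smul_apply, smul_eq_mul, hw]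
      rw [Finset.mul_sum]
      exact Finset.sum_congr rfl fun l _ => by ring
    rw [this, abs_mul, abs_of_pos (inv_pos.mpr hlam)]
    calc lam⁻¹ * |∑ l : {j : Fin q // j ∉ S}, A i.val l.val * γ0 l.val|
        ≤ lam⁻¹ * lam := by
          exact mul_le_mul_of_nonneg_left (hsum i.val) (le_of_lt (inv_pos.mpr hlam))
      _ = 1 := inv_mul_cancel₀ hlam.ne'
end
end

section
/- Let U and W be two independent standard normal (N(0,1)) real random variables. Then for every L > 1, E[exp(UW/L)] ≤ exp(1/(2L² − 2L)). -/
open MeasureTheory ProbabilityTheory Real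

lemma gaussianPDFReal_zero_one (x : ℝ) :
    gaussianPDFReal 0 1 x = (Real.sqrt (2 * π))⁻¹ * rexp (-x ^ 2 / 2) := by
  simp [gaussianPDFReal]

lemma lintegral_ofReal_gaussianReal (f : ℝ → ℝ) (hf : Measurable f) (h0 : ∀ x, 0 ≤ f x) :
    ∫⁻ x, ENNReal.ofReal (f x) ∂(gaussianReal 0 1)
      = ∫⁻ x, ENNReal.ofReal (f x * gaussianPDFReal 0 1 x) := by
  rw [gaussianReal_of_var_ne_zero 0 one_ne_zero,
    lintegral_withDensity_eq_lintegral_mul _ (measurable_gaussianPDF 0 1) hf.ennreal_ofReal]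
  congr 1
  ext x
  simp only [Pi.mul_apply, gaussianPDF]
  rw [← ENNReal.ofReal_mul (gaussianPDFReal_nonneg 0 1 x), mul_comm]

lemma gaussian_lintegral_exp_mul (t : ℝ) :
    ∫⁻ x, ENNReal.ofReal (rexp (t * x)) ∂(gaussianReal 0 1)
      = ENNReal.ofReal (rexp (t ^ 2 / 2)) := by
  rw [lintegral_ofReal_gaussianReal _ (by fun_prop) (fun x => (exp_pos _).le)]
  have hkey : ∀ x : ℝ, rexp (t * x) * gaussianPDFReal 0 1 x
      = (Real.sqrt (2 * π))⁻¹ * (rexp (-(1/2) * (x - t) ^ 2) * rexp (t ^ 2 / 2)) := by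
    intro x
    rw [gaussianPDFReal_zero_one]
    rw [show rexp (t * x) * ((Real.sqrt (2 * π))⁻¹ * rexp (-x ^ 2 / 2))
        = (Real.sqrt (2 * π))⁻¹ * (rexp (t * x) * rexp (-x ^ 2 / 2)) by ring,
      ← Real.exp_add, ← Real.exp_add]
    congr 2
    ring
  simp_rw [hkey]
  have hint : Integrable (fun x : ℝ => rexp (-(1/2) * (x - t) ^ 2) * rexp (t ^ 2 / 2)) := by
    exact ((integrable_exp_neg_mul_sq (by norm_num : (0:ℝ) < 1/2)).comp_sub_right t).mul_const _
  rw [← ofReal_integral_eq_lintegral_ofReal (hint.const_mul _)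
    (Filter.Eventually.of_forall fun x => by positivity)]
  congr 1
  rw [integral_const_mul, integral_mul_const,
    integral_sub_right_eq_self (fun x : ℝ => rexp (-(1/2) * x ^ 2)) t,
    integral_gaussian]
  have h2π : (0:ℝ) < 2 * π := by positivity
  rw [show π / (1/2 : ℝ) = 2 * π by ring]
  rw [inv_mul_eq_div, mul_comm, mul_div_assoc, div_self (by positivity : Real.sqrt (2*π) ≠ 0),
    mul_one]

lemma gaussian_lintegral_exp_sq {a : ℝ} (ha : a < 1/2) :
    ∫⁻ x, ENNReal.ofReal (rexp (a * x ^ 2)) ∂(gaussianReal 0 1)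
      = ENNReal.ofReal ((Real.sqrt (2 * π))⁻¹ * Real.sqrt (π / (1/2 - a))) := by
  rw [lintegral_ofReal_gaussianReal _ (by fun_prop) (fun x => (exp_pos _).le)]
  have hkey : ∀ x : ℝ, rexp (a * x ^ 2) * gaussianPDFReal 0 1 x
      = (Real.sqrt (2 * π))⁻¹ * rexp (-(1/2 - a) * x ^ 2) := by
    intro x
    rw [gaussianPDFReal_zero_one]
    rw [show rexp (a * x ^ 2) * ((Real.sqrt (2 * π))⁻¹ * rexp (-x ^ 2 / 2))
        = (Real.sqrt (2 * π))⁻¹ * (rexp (a * x ^ 2) * rexp (-x ^ 2 / 2)) by ring,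
      ← Real.exp_add]
    congr 2
    ring
  simp_rw [hkey]
  have hint : Integrable (fun x : ℝ => rexp (-(1/2 - a) * x ^ 2)) :=
    integrable_exp_neg_mul_sq (by linarith)
  rw [← ofReal_integral_eq_lintegral_ofReal (hint.const_mul _)
    (Filter.Eventually.of_forall fun x => by positivity)]
  congr 1
  rw [integral_const_mul, integral_gaussian]

/-- Lemma `UW.lemma`: for independent standard Gaussians `U, W` and `L > 1`,
`E exp(UW/L) ≤ exp(1/(2L² - 2L))`. -/
theorem gaussian_product_mgf_bound
    {Ω : Type*} [MeasurableSpace Ω] (μ : Measure Ω) [IsProbabilityMeasure μ]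
    (U W : Ω → ℝ) (hU : Measurable U) (hW : Measurable W)
    (hind : IndepFun U W μ)
    (hUlaw : Measure.map U μ = gaussianReal 0 1)
    (hWlaw : Measure.map W μ = gaussianReal 0 1)
    (L : ℝ) (hL : 1 < L) :
    ∫ ω, Real.exp (U ω * W ω / L) ∂μ ≤ Real.exp (1 / (2 * L ^ 2 - 2 * L)) := by
  have hL0 : (0:ℝ) < L := by linarith
  have hL1 : (1:ℝ) < L ^ 2 := by nlinarith
  have hLL : (0:ℝ) < L ^ 2 - L := by nlinarith
  have hmap : μ.map (fun ω => (U ω, W ω))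
      = (gaussianReal 0 1).prod (gaussianReal 0 1) := by
    have h := (indepFun_iff_map_prod_eq_prod_map_map hU.aemeasurable hW.aemeasurable).mp hind
    rwa [hUlaw, hWlaw] at h
  have hfm : Measurable fun p : ℝ × ℝ => ENNReal.ofReal (rexp (p.1 * p.2 / L)) :=
    (((measurable_fst.mul measurable_snd).div_const L).exp).ennreal_ofReal
  -- express the integral via lintegral
  rw [integral_eq_lintegral_of_nonneg_ae (f := fun ω => rexp (U ω * W ω / L))
    (Filter.Eventually.of_forall fun ω => (exp_pos _).le)
    (((hU.mul hW).div_const L).exp.aestronglyMeasurable)]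
  have h1 : ∫⁻ ω, ENNReal.ofReal (rexp (U ω * W ω / L)) ∂μ
      = ∫⁻ p : ℝ × ℝ, ENNReal.ofReal (rexp (p.1 * p.2 / L)) ∂((gaussianReal 0 1).prod (gaussianReal 0 1)) := by
    rw [← hmap, lintegral_map hfm (hU.prodMk hW)]
  have hinner : ∀ x : ℝ, ∫⁻ y, ENNReal.ofReal (rexp (x * y / L)) ∂(gaussianReal 0 1)
      = ENNReal.ofReal (rexp (1 / (2 * L ^ 2) * x ^ 2)) := by
    intro x
    have h : ∀ y : ℝ, x * y / L = (x / L) * y := fun y => by ring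
    have harg : (x / L) ^ 2 / 2 = 1 / (2 * L ^ 2) * x ^ 2 := by
      rw [div_pow]
      ring
    simp_rw [h, gaussian_lintegral_exp_mul (x / L), harg]
  have ha : 1 / (2 * L ^ 2) < 1/2 := by
    rw [div_lt_div_iff₀ (by positivity) (by norm_num)]
    nlinarith
  have h2 : ∫⁻ p : ℝ × ℝ, ENNReal.ofReal (rexp (p.1 * p.2 / L)) ∂((gaussianReal 0 1).prod (gaussianReal 0 1))
      = ENNReal.ofReal ((Real.sqrt (2 * π))⁻¹
          * Real.sqrt (π / (1/2 - 1 / (2 * L ^ 2)))) := by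
    rw [lintegral_prod _ hfm.aemeasurable]
    simp only
    simp_rw [hinner]
    rw [gaussian_lintegral_exp_sq ha]
  rw [h1, h2, ENNReal.toReal_ofReal (by positivity)]
  -- now a purely real inequality
  set r : ℝ := (Real.sqrt (2 * π))⁻¹ * Real.sqrt (π / (1/2 - 1 / (2 * L ^ 2))) with hr
  have hd : (0:ℝ) < 1/2 - 1 / (2 * L ^ 2) := by linarith
  have hr0 : 0 ≤ r := by positivity
  have hr2 : r ^ 2 = 1 / (1 - 1 / L ^ 2) := by
    have hL2 : (0:ℝ) < L ^ 2 := by positivity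
    have h11 : (0:ℝ) < 1 - 1 / L ^ 2 := by
      rw [sub_pos, div_lt_one hL2]; exact hL1
    rw [hr, mul_pow, inv_pow, Real.sq_sqrt (by positivity : (0:ℝ) ≤ 2 * π),
      Real.sq_sqrt (div_nonneg pi_pos.le hd.le),
      inv_mul_eq_div, div_div, div_eq_div_iff (ne_of_gt (mul_pos hd (by positivity))) (ne_of_gt h11)]
    field_simp
  have hc2 : 1 / (1 - 1 / L ^ 2) ≤ rexp (1 / (2 * L ^ 2 - 2 * L)) ^ 2 := by
    have he : rexp (1 / (2 * L ^ 2 - 2 * L)) ^ 2 = rexp (1 / (L ^ 2 - L)) := by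
      rw [sq, ← Real.exp_add, Real.exp_eq_exp]
      have h2L : (2:ℝ) * L ^ 2 - 2 * L ≠ 0 := by nlinarith
      have h3L : (L:ℝ) ^ 2 - L ≠ 0 := ne_of_gt hLL
      rw [← add_div, div_eq_div_iff (by nlinarith) (by nlinarith)]
      ring
    rw [he]
    have h11 : (0:ℝ) < 1 - 1 / L ^ 2 := by
      rw [sub_pos, div_lt_one (by positivity : (0:ℝ) < L ^ 2)]; exact hL1
    have hexp : 1 + 1 / (L ^ 2 - L) ≤ rexp (1 / (L ^ 2 - L)) := by
      have := Real.add_one_le_exp (1 / (L ^ 2 - L)); linarith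
    refine le_trans ?_ hexp
    rw [div_le_iff₀ h11]
    have heq : (1 + 1 / (L ^ 2 - L)) * (1 - 1 / L ^ 2)
        = ((L ^ 2 - L + 1) * (L ^ 2 - 1)) / ((L ^ 2 - L) * L ^ 2) := by
      field_simp
      have hL1' : L - 1 ≠ 0 := by linarith
      field_simp
    rw [heq, le_div_iff₀ (mul_pos hLL (by positivity))]
    nlinarith
  have := Real.sqrt_le_sqrt (hr2 ▸ hc2)
  rwa [Real.sqrt_sq hr0, Real.sqrt_sq (exp_pos _).le] at this
end
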